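/- arXiv:0806.0867 — 12 statements merged into one kernel-verified Lean document; each statement's English description precedes it below -/
import Mathlib

section
/- Let q be an n×n complex matrix with q_{ii}=1 and q_{ij}q_{ji}=1. Let c_i, c_i' (i=1,...,n) and a scalar λ be given, and set x = Σ_i c_i x_i, x' = Σ_i c_i' x_i in V = ℂⁿ. Then x⊗x' − λ x'⊗x lies in the kernel of id + τ_q if and only if (1 − λ q_{ij}) c_i' c_j = (λ − q_{ij}) c_i c_j' for all indices i, j. -/
open TensorProduct

/-- For `x = Σ cᵢ xᵢ`, `x' = Σ cᵢ' xᵢ`, the tensor `x ⊗ x' − λ x' ⊗ x` lies in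
`ker(id + τ_q)` iff `(1 − λ q_{ij}) cᵢ' cⱼ = (λ − q_{ij}) cᵢ cⱼ'` for all `i, j`. -/
theorem mem_ker_id_add_tau_q_iff (n : ℕ) (q : Fin n → Fin n → ℂ)
    (hdiag : ∀ i, q i i = 1) (hinv : ∀ i j, q i j * q j i = 1)
    (τ : (Fin n → ℂ) ⊗[ℂ] (Fin n → ℂ) →ₗ[ℂ] (Fin n → ℂ) ⊗[ℂ] (Fin n → ℂ))
    (hτ : ∀ i j, τ (Pi.single i (1:ℂ) ⊗ₜ[ℂ] Pi.single j (1:ℂ)) =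
      q i j • (Pi.single j (1:ℂ) ⊗ₜ[ℂ] Pi.single i (1:ℂ)))
    (c c' : Fin n → ℂ) (lam : ℂ) :
    let x : Fin n → ℂ := ∑ i, c i • (Pi.single i 1 : Fin n → ℂ)
    let x' : Fin n → ℂ := ∑ i, c' i • (Pi.single i 1 : Fin n → ℂ)
    ((x ⊗ₜ[ℂ] x' - lam • (x' ⊗ₜ[ℂ] x)) ∈ LinearMap.ker (LinearMap.id + τ) ↔
      ∀ i j, (1 - lam * q i j) * c' i * c j = (lam - q i j) * c i * c' j) := by
  intro x x'
  classical
  set e : Fin n → (Fin n → ℂ) := fun i => (Pi.single i 1 : Fin n → ℂ) with he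
  have hx : ∀ (a b : Fin n → ℂ),
      ((∑ i, a i • e i) ⊗ₜ[ℂ] (∑ j, b j • e j) : (Fin n → ℂ) ⊗[ℂ] (Fin n → ℂ))
        = ∑ i, ∑ j, (a i * b j) • (e i ⊗ₜ[ℂ] e j) := by
    intro a b
    rw [sum_tmul]
    refine Finset.sum_congr rfl fun i _ => ?_
    rw [tmul_sum]
    refine Finset.sum_congr rfl fun j _ => ?_
    rw [smul_tmul_smul, smul_tmul']
  have hτs : ∀ (a b : Fin n → ℂ), τ ((∑ i, a i • e i) ⊗ₜ[ℂ] (∑ j, b j • e j))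
      = ∑ i, ∑ j, (a i * b j * q i j) • (e j ⊗ₜ[ℂ] e i) := by
    intro a b
    rw [hx, map_sum]
    refine Finset.sum_congr rfl fun i _ => ?_
    rw [map_sum]
    refine Finset.sum_congr rfl fun j _ => ?_
    rw [map_smul, hτ i j, smul_smul]
  set B := (Pi.basisFun ℂ (Fin n)).tensorProduct (Pi.basisFun ℂ (Fin n)) with hB
  rw [LinearMap.mem_ker, LinearMap.add_apply, LinearMap.id_apply,
    ← B.repr.map_eq_zero_iff, Finsupp.ext_iff]
  have hcoef : ∀ i j : Fin n,
      B.repr ((x ⊗ₜ[ℂ] x' - lam • (x' ⊗ₜ[ℂ] x)) + τ (x ⊗ₜ[ℂ] x' - lam • (x' ⊗ₜ[ℂ] x))) (i, j)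
        = (c i * c' j - lam * (c' i * c j)) + (c j * c' i * q j i - lam * (c' j * c i * q j i)) := by
    intro i j
    have hτz : τ (x ⊗ₜ[ℂ] x' - lam • (x' ⊗ₜ[ℂ] x))
        = ∑ k, ∑ l, ((c k * c' l - lam * (c' k * c l)) * q k l) • (e l ⊗ₜ[ℂ] e k) := by
      rw [map_sub, map_smul, show x = ∑ i, c i • e i from rfl,
        show x' = ∑ i, c' i • e i from rfl, hτs c c', hτs c' c,
        Finset.smul_sum, ← Finset.sum_sub_distrib]
      refine Finset.sum_congr rfl fun k _ => ?_
      rw [Finset.smul_sum, ← Finset.sum_sub_distrib]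
      refine Finset.sum_congr rfl fun l _ => ?_
      rw [smul_smul]
      module
    have hz : x ⊗ₜ[ℂ] x' - lam • (x' ⊗ₜ[ℂ] x)
        = ∑ k, ∑ l, (c k * c' l - lam * (c' k * c l)) • (e k ⊗ₜ[ℂ] e l) := by
      rw [show x = ∑ i, c i • e i from rfl, show x' = ∑ i, c' i • e i from rfl,
        hx c c', hx c' c]
      simp only [Finset.smul_sum, smul_smul, ← Finset.sum_sub_distrib]
      refine Finset.sum_congr rfl fun k _ => Finset.sum_congr rfl fun l _ => ?_
      module
    rw [hτz, hz]
    simp only [map_add, map_sum, map_smul, Finsupp.add_apply, Finsupp.smul_apply,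
      Finset.sum_apply', hB, Module.Basis.tensorProduct_repr_tmul_apply, Pi.basisFun_repr,
      he, Pi.single_apply, smul_eq_mul]
    simp [Finset.sum_ite_eq, mul_ite]
    ring
  constructor
  · intro h i j
    have := h (j, i)
    rw [hcoef j i] at this
    simp only [Finsupp.coe_zero, Pi.zero_apply] at this
    linear_combination this
  · intro h p
    obtain ⟨i, j⟩ := p
    rw [hcoef i j]
    simp only [Finsupp.coe_zero, Pi.zero_apply]
    linear_combination h j i
end

section
/- Let A be an endomorphism of V = ℂⁿ with matrix entries A_i^j (so A x_i = Σ_j A_i^j x_j), and q an n×n matrix with q_{ii}=1, q_{ij}q_{ji}=1. Then A preserves ∧²_q V = ker(id+τ_q) and the adjoint A* preserves ∧²_{qᵀ} V* if and only if (q_{kl} − q_{ij}) A_k^i A_l^j = 0 for all indices i,j,k,l. -/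
open TensorProduct

private lemma aux_pres (n : ℕ) (q : Fin n → Fin n → ℂ)
    (hinv : ∀ i j, q i j * q j i = 1)
    (τ : (Fin n → ℂ) ⊗[ℂ] (Fin n → ℂ) →ₗ[ℂ] (Fin n → ℂ) ⊗[ℂ] (Fin n → ℂ))
    (hτ : ∀ i j, τ (Pi.single i (1:ℂ) ⊗ₜ[ℂ] Pi.single j (1:ℂ)) =
      q i j • (Pi.single j (1:ℂ) ⊗ₜ[ℂ] Pi.single i (1:ℂ)))
    (A : (Fin n → ℂ) →ₗ[ℂ] (Fin n → ℂ)) (a : Fin n → Fin n → ℂ)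
    (hA : ∀ i, A (Pi.single i 1) = ∑ j, a i j • (Pi.single j 1 : Fin n → ℂ)) :
    (∀ v ∈ LinearMap.ker (LinearMap.id + τ),
        TensorProduct.map A A v ∈ LinearMap.ker (LinearMap.id + τ)) ↔
    ∀ i j k l, (1 - q i j * q l k) * (a i k * a j l)
      + (q l k - q i j) * (a i l * a j k) = 0 := by
  classical
  set B : Module.Basis (Fin n) ℂ (Fin n → ℂ) := Pi.basisFun ℂ (Fin n) with hB
  set B2 : Module.Basis (Fin n × Fin n) ℂ ((Fin n → ℂ) ⊗[ℂ] (Fin n → ℂ)) := B.tensorProduct B with hB2d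
  have hB2 : ∀ i j : Fin n, B2 (i, j) = Pi.single i (1:ℂ) ⊗ₜ[ℂ] Pi.single j (1:ℂ) := by
    intro i j
    simp [hB2d, hB, Module.Basis.tensorProduct_apply]
  have hrt : ∀ (u w : Fin n → ℂ) (k l : Fin n), B2.repr (u ⊗ₜ[ℂ] w) (k, l) = u k * w l := by
    intro u w k l
    simp [hB2d, hB, mul_comm]
  have hAe : ∀ i k, A (Pi.single i 1) k = a i k := by
    intro i k
    rw [hA i]
    simp [Finset.sum_apply, Pi.single_apply]
  -- repr of τ
  have keyτ : ∀ (v) (k l : Fin n), B2.repr (τ v) (k, l) = q l k * B2.repr v (l, k) := by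
    intro v k l
    have : (B2.coord (k, l)).comp τ = q l k • B2.coord (l, k) := by
      apply B2.ext
      rintro ⟨i, j⟩
      simp only [LinearMap.comp_apply, LinearMap.smul_apply, Module.Basis.coord_apply, hB2, hτ,
        map_smul, Finsupp.smul_apply, hrt, smul_eq_mul, Pi.single_apply]
      split_ifs with h1 h2 h3 <;> try ring
      subst h1; subst h2; ring
    have := LinearMap.congr_fun this v
    simpa using this
  -- repr of map A A
  have keyM : ∀ (v) (k l : Fin n), B2.repr (TensorProduct.map A A v) (k, l)
      = ∑ i, ∑ j, a i k * a j l * B2.repr v (i, j) := by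
    intro v k l
    have : (B2.coord (k, l)).comp (TensorProduct.map A A)
        = ∑ i, ∑ j, (a i k * a j l) • B2.coord (i, j) := by
      apply B2.ext
      rintro ⟨i, j⟩
      simp only [LinearMap.comp_apply, Module.Basis.coord_apply, hB2, TensorProduct.map_tmul,
        hrt, hAe, LinearMap.sum_apply, LinearMap.smul_apply, smul_eq_mul, Pi.single_apply]
      rw [Finset.sum_eq_single i, Finset.sum_eq_single j] <;> simp +contextual
    have := LinearMap.congr_fun this v
    simpa [LinearMap.sum_apply] using this
  have hker : ∀ w : (Fin n → ℂ) ⊗[ℂ] (Fin n → ℂ),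
      w = 0 ↔ ∀ k l : Fin n, B2.repr w (k, l) = 0 := by
    intro w
    constructor
    · rintro rfl; simp
    · intro h
      have : B2.repr w = 0 := Finsupp.ext fun p => by
        obtain ⟨k, l⟩ := p; simpa using h k l
      exact (LinearEquiv.map_eq_zero_iff _).mp this
  have hmem : ∀ v, v ∈ LinearMap.ker (LinearMap.id + τ) ↔
      ∀ k l : Fin n, B2.repr v (k, l) + q l k * B2.repr v (l, k) = 0 := by
    intro v
    rw [LinearMap.mem_ker, hker]
    constructor <;> intro h k l <;> have := h k l <;>
      simpa [LinearMap.add_apply, keyτ] using this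
  constructor
  · intro hpres i j k l
    have hwmem : (Pi.single i (1:ℂ) ⊗ₜ[ℂ] Pi.single j (1:ℂ)
        - q i j • (Pi.single j (1:ℂ) ⊗ₜ[ℂ] Pi.single i (1:ℂ)))
        ∈ LinearMap.ker (LinearMap.id + τ) := by
      simp only [LinearMap.mem_ker, LinearMap.add_apply, LinearMap.id_apply, map_sub,
        map_smul, hτ, smul_add, smul_smul, hinv i j, one_smul]
      module
    have h0 := (hmem _).mp (hpres _ hwmem) k l
    have hrep : ∀ k l : Fin n, B2.repr (TensorProduct.map A A
        (Pi.single i (1:ℂ) ⊗ₜ[ℂ] Pi.single j (1:ℂ)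
          - q i j • (Pi.single j (1:ℂ) ⊗ₜ[ℂ] Pi.single i (1:ℂ)))) (k, l)
        = a i k * a j l - q i j * (a j k * a i l) := by
      intro k l
      simp only [map_sub, map_smul, TensorProduct.map_tmul, Finsupp.sub_apply,
        Finsupp.smul_apply, hrt, hAe, smul_eq_mul]
    rw [hrep, hrep] at h0
    linear_combination h0
  · intro hC v hv
    rw [hmem] at hv ⊢
    intro k l
    rw [keyM, keyM]
    set c : Fin n → Fin n → ℂ := fun i j => B2.repr v (i, j) with hc
    have hcr : ∀ i j, c i j + q j i * c j i = 0 := fun i j => hv i j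
    set g : Fin n → Fin n → ℂ := fun i j =>
      a i k * a j l * c i j + q l k * (a i l * a j k * c i j) with hg
    have hgg : ∀ i j, g i j + g j i = 0 := by
      intro i j
      have h1 := hcr j i
      have h2 := hC i j k l
      simp only [hg]
      linear_combination (a j k * a i l + q l k * (a j l * a i k)) * h1 + c i j * h2
    have hS : (∑ i, ∑ j, g i j) + (∑ i, ∑ j, g i j) = 0 := by
      nth_rewrite 2 [Finset.sum_comm]
      rw [← Finset.sum_add_distrib]
      rw [Finset.sum_congr rfl fun i _ => (Finset.sum_add_distrib).symm]
      rw [Finset.sum_congr rfl fun i _ => Finset.sum_congr rfl fun j _ => hgg i j]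
      simp
    have hLHS : (∑ i, ∑ j, a i k * a j l * c i j)
        + q l k * (∑ i, ∑ j, a i l * a j k * c i j) = ∑ i, ∑ j, g i j := by
      rw [Finset.mul_sum, ← Finset.sum_add_distrib]
      refine Finset.sum_congr rfl fun i _ => ?_
      rw [Finset.mul_sum, ← Finset.sum_add_distrib]
    rw [hLHS]
    exact add_self_eq_zero.mp hS

/-- An endomorphism `A` of `ℂⁿ` preserves `∧²_q V = ker(id + τ_q)` and its adjoint
preserves `∧²_{qᵀ} V*` iff `(q_{kl} − q_{ij}) A_k^i A_l^j = 0` for all `i,j,k,l`. -/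
theorem preserves_q_ext_square_iff (n : ℕ) (q : Fin n → Fin n → ℂ)
    (hdiag : ∀ i, q i i = 1) (hinv : ∀ i j, q i j * q j i = 1)
    (τ : (Fin n → ℂ) ⊗[ℂ] (Fin n → ℂ) →ₗ[ℂ] (Fin n → ℂ) ⊗[ℂ] (Fin n → ℂ))
    (hτ : ∀ i j, τ (Pi.single i (1:ℂ) ⊗ₜ[ℂ] Pi.single j (1:ℂ)) =
      q i j • (Pi.single j (1:ℂ) ⊗ₜ[ℂ] Pi.single i (1:ℂ)))
    (τT : (Fin n → ℂ) ⊗[ℂ] (Fin n → ℂ) →ₗ[ℂ] (Fin n → ℂ) ⊗[ℂ] (Fin n → ℂ))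
    (hτT : ∀ i j, τT (Pi.single i (1:ℂ) ⊗ₜ[ℂ] Pi.single j (1:ℂ)) =
      q j i • (Pi.single j (1:ℂ) ⊗ₜ[ℂ] Pi.single i (1:ℂ)))
    (A Astar : (Fin n → ℂ) →ₗ[ℂ] (Fin n → ℂ)) (a : Fin n → Fin n → ℂ)
    (hA : ∀ i, A (Pi.single i 1) = ∑ j, a i j • (Pi.single j 1 : Fin n → ℂ))
    (hAstar : ∀ j, Astar (Pi.single j 1) = ∑ i, a i j • (Pi.single i 1 : Fin n → ℂ)) :
    ((∀ v ∈ LinearMap.ker (LinearMap.id + τ),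
        TensorProduct.map A A v ∈ LinearMap.ker (LinearMap.id + τ)) ∧
      (∀ f ∈ LinearMap.ker (LinearMap.id + τT),
        TensorProduct.map Astar Astar f ∈ LinearMap.ker (LinearMap.id + τT)))
    ↔ ∀ i j k l, (q k l - q i j) * a k i * a l j = 0 := by
  rw [aux_pres n q hinv τ hτ A a hA,
    aux_pres n (fun i j => q j i) (fun i j => by simpa [mul_comm] using hinv i j) τT hτT
      Astar (fun i j => a j i) hAstar]
  constructor
  · rintro ⟨h1, h2⟩ i j k l
    have e1 := h1 k l i j
    have e2 := h2 i j k l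
    linear_combination (-(q i j)/2) * e1 + (-(q i j)/2) * e2
      - (q k l * (a k i * a l j)) * hinv i j
  · intro hC
    constructor
    · intro i j k l
      have c1 := hC k l i j
      have c2 := hC l k i j
      linear_combination (-(q l k)) * c1 - c2 - (a i k * a j l) * hinv k l
    · intro i j k l
      have c1 := hC i j k l
      have c2 := hC j i k l
      linear_combination (-(q j i)) * c1 + c2 - (a k i * a l j) * hinv i j
end

section
/- Let B be an equivalence class (block) of the 'same block' relation for a matrix q with q_{ii}=1, q_{ij}q_{ji}=1. Then either q_{ij}=1 for all i,j in B (positive block), or |B|>1 and q_{ij}=−1 for all distinct i,j in B (negative block). -/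
/-- Every block (equivalence class of the "same block" relation) is either a
positive block (`q_{ij} = 1` on the block) or a negative block (more than one
element and `q_{ij} = −1` for distinct `i, j` in the block). -/
theorem block_pos_or_neg (n : ℕ) (q : Fin n → Fin n → ℂ)
    (hdiag : ∀ i, q i i = 1) (hinv : ∀ i j, q i j * q j i = 1)
    (B : Set (Fin n))
    (hB : ∃ i, B = {j | i = j ∨
      ((∀ k, k ≠ i → k ≠ j → q i k = q j k) ∧ (q i j = 1 ∨ q i j = -1))}) :
    (∀ i ∈ B, ∀ j ∈ B, q i j = 1) ∨
      ((∃ i ∈ B, ∃ j ∈ B, i ≠ j) ∧ ∀ i ∈ B, ∀ j ∈ B, i ≠ j → q i j = -1) := by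
  obtain ⟨i, rfl⟩ := hB
  have hiB : i ∈ {j | i = j ∨
      ((∀ k, k ≠ i → k ≠ j → q i k = q j k) ∧ (q i j = 1 ∨ q i j = -1))} :=
    Or.inl rfl
  -- symmetry of sign via hinv
  have hsym : ∀ a b : Fin n, ∀ c : ℂ, q a b = c → c * c = 1 → q b a = c := by
    intro a b c hab hc
    have h := hinv a b
    rw [hab] at h
    have : c * q b a = c * c := by rw [h, hc]
    exact mul_left_cancel₀ (by rintro rfl; simp at hc) this
  by_cases hpos : ∀ j ∈ {j | i = j ∨
      ((∀ k, k ≠ i → k ≠ j → q i k = q j k) ∧ (q i j = 1 ∨ q i j = -1))}, q i j = 1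
  · left
    intro a ha b hb
    rcases ha with rfl | ⟨hsa, hqa⟩
    · exact hpos b hb
    · rcases hb with rfl | hbmem
      · exact hsym i a 1 (hpos a (Or.inr ⟨hsa, hqa⟩)) (by ring)
      · by_cases hab : a = b
        · subst hab; exact hdiag a
        · by_cases hbi : b = i
          · rw [hbi]
            exact hsym i a 1 (hpos a (Or.inr ⟨hsa, hqa⟩)) (by ring)
          · rw [← hsa b hbi (Ne.symm hab)]
            exact hpos b (Or.inr hbmem)
  · right
    push_neg at hpos
    obtain ⟨j0, hj0B, hj0⟩ := hpos
    have hj0i : j0 ≠ i := by rintro rfl; exact hj0 (hdiag _)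
    have hij0 : q i j0 = -1 := by
      rcases hj0B with rfl | ⟨_, h1 | h1⟩
      · exact absurd rfl hj0i
      · exact absurd h1 hj0
      · exact h1
    obtain ⟨hsj0, _⟩ : (∀ k, k ≠ i → k ≠ j0 → q i k = q j0 k) ∧ (q i j0 = 1 ∨ q i j0 = -1) := by
      rcases hj0B with rfl | h; · exact absurd rfl hj0i
      · exact h
    -- every k in B, k ≠ i has q i k = -1
    have key : ∀ k ∈ {j | i = j ∨
        ((∀ k, k ≠ i → k ≠ j → q i k = q j k) ∧ (q i j = 1 ∨ q i j = -1))},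
        k ≠ i → q i k = -1 := by
      intro k hk hki
      rcases hk with rfl | ⟨hsk, h1 | h1⟩
      · exact absurd rfl hki
      · exfalso
        by_cases hkj0 : k = j0
        · subst hkj0; exact hj0 h1
        · -- q j0 k = q i k = 1, q k j0 = q i j0 = -1, contradiction with hinv
          have e1 : q j0 k = 1 := by rw [← hsj0 k hki hkj0]; exact h1
          have e2 : q k j0 = -1 := by rw [← hsk j0 hj0i (Ne.symm hkj0)]; exact hij0
          have h := hinv j0 k
          rw [e1, e2] at h
          norm_num at h
      · exact h1
    refine ⟨⟨i, hiB, j0, hj0B, Ne.symm hj0i⟩, ?_⟩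
    intro a ha b hb hab
    rcases ha with rfl | ⟨hsa, hqa⟩
    · exact key b hb (Ne.symm hab)
    · by_cases hbi : b = i
      · rw [hbi]
        exact hsym i a (-1) (key a (Or.inr ⟨hsa, hqa⟩) (hbi ▸ hab)) (by ring)
      · rw [← hsa b hbi (Ne.symm hab)]
        exact key b hb hbi
end

section
/- Let q be an n×n matrix with q_{ii}=1, q_{ij}q_{ji}=1, all q_{ij} ≠ 0. Then the assignment γ_i ↦ (its multiplicative character γ_j ↦ q_{ij}) extends to a well-defined unitary bicharacter R_q on the abelian group Γ_q = ⟨γ_1,...,γ_n⟩ ⊂ GL_n(ℂ) (where γ_i acts diagonally by γ_i(x_j) = q_{ij} x_j), i.e. R_q(γ_i,γ_j) = q_{ij}, R_q(γ,·) is a homomorphism for each γ, and R_q(γ,γ') = R_q(γ',γ)^{-1}. -/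
section Aux

variable {n : ℕ} (q : Fin n → Fin n → ℂ) (hne : ∀ i j, q i j ≠ 0)

/-- The diagonal invertible matrix with entries `∏ i, q i j ^ v i`. -/
private noncomputable def Pd (v : Fin n → ℤ) : (Matrix (Fin n) (Fin n) ℂ)ˣ where
  val := Matrix.diagonal fun j => ∏ i, q i j ^ v i
  inv := Matrix.diagonal fun j => ∏ i, q i j ^ (-v i)
  val_inv := by
    rw [Matrix.diagonal_mul_diagonal]
    have : ∀ j, (∏ i, q i j ^ v i) * ∏ i, q i j ^ (-v i) = 1 := by
      intro j
      rw [← Finset.prod_mul_distrib]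
      refine Finset.prod_eq_one fun i _ => ?_
      rw [← zpow_add₀ (hne i j), add_neg_cancel, zpow_zero]
    simp only [this, Matrix.diagonal_one]
  inv_val := by
    rw [Matrix.diagonal_mul_diagonal]
    have : ∀ j, (∏ i, q i j ^ (-v i)) * ∏ i, q i j ^ v i = 1 := by
      intro j
      rw [← Finset.prod_mul_distrib]
      refine Finset.prod_eq_one fun i _ => ?_
      rw [← zpow_add₀ (hne i j), neg_add_cancel, zpow_zero]
    simp only [this, Matrix.diagonal_one]

private lemma Pd_val (v : Fin n → ℤ) :
    (Pd q hne v : Matrix (Fin n) (Fin n) ℂ) = Matrix.diagonal fun j => ∏ i, q i j ^ v i := rfl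

private lemma Pd_add (v w : Fin n → ℤ) :
    Pd q hne (v + w) = Pd q hne v * Pd q hne w := by
  ext
  simp only [Units.val_mul, Pd_val, Matrix.diagonal_mul_diagonal]
  congr 1
  funext j
  rw [← Finset.prod_mul_distrib]
  refine Finset.prod_congr rfl fun i _ => ?_
  exact zpow_add₀ (hne i j) _ _

private lemma Pd_zero : Pd q hne 0 = 1 := by
  ext
  simp [Pd_val]

private lemma Pd_neg (v : Fin n → ℤ) : Pd q hne (-v) = (Pd q hne v)⁻¹ := by
  rw [eq_inv_iff_mul_eq_one, ← Pd_add, neg_add_cancel, Pd_zero]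

private lemma Pd_single (γ : Fin n → (Matrix (Fin n) (Fin n) ℂ)ˣ)
    (hγ : ∀ i, (γ i : Matrix (Fin n) (Fin n) ℂ) = Matrix.diagonal (fun j => q i j))
    (i : Fin n) : Pd q hne (Pi.single i 1) = γ i := by
  ext
  rw [Pd_val, hγ]
  congr 1
  funext j
  rw [Finset.prod_eq_single i (fun b _ hb => by simp [Pi.single_eq_of_ne hb])
    (fun h => absurd (Finset.mem_univ i) h)]
  simp

/-- Every element of the closure is of the form `Pd q hne v`. -/
private lemma mem_closure_exists (γ : Fin n → (Matrix (Fin n) (Fin n) ℂ)ˣ)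
    (hγ : ∀ i, (γ i : Matrix (Fin n) (Fin n) ℂ) = Matrix.diagonal (fun j => q i j))
    {x : (Matrix (Fin n) (Fin n) ℂ)ˣ} (hx : x ∈ Subgroup.closure (Set.range γ)) :
    ∃ v : Fin n → ℤ, Pd q hne v = x := by
  refine Subgroup.closure_induction (p := fun x _ => ∃ v, Pd q hne v = x) ?_ ?_ ?_ ?_ hx
  · rintro _ ⟨i, rfl⟩
    exact ⟨Pi.single i 1, Pd_single q hne γ hγ i⟩
  · exact ⟨0, Pd_zero q hne⟩
  · rintro x y _ _ ⟨v, rfl⟩ ⟨w, rfl⟩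
    exact ⟨v + w, Pd_add q hne v w⟩
  · rintro x _ ⟨v, rfl⟩
    exact ⟨-v, Pd_neg q hne v⟩

/-- The key symmetry identity. -/
private lemma key (hinv : ∀ i j, q i j * q j i = 1) (v w : Fin n → ℤ) :
    ∏ j, (∏ i, q i j ^ v i) ^ w j = ∏ i, (∏ j, q j i ^ w j) ^ (-v i) := by
  have hq : ∀ i j, q i j = (q j i)⁻¹ := fun i j =>
    eq_inv_of_mul_eq_one_right (hinv j i)
  calc ∏ j, (∏ i, q i j ^ v i) ^ w j
      = ∏ j, ∏ i, (q j i) ^ (w j * (-v i)) := by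
        refine Finset.prod_congr rfl fun j _ => ?_
        rw [← Finset.prod_zpow]
        refine Finset.prod_congr rfl fun i _ => ?_
        rw [← zpow_mul, hq i j, inv_zpow, ← zpow_neg]
        congr 1
        ring
    _ = ∏ i, ∏ j, (q j i) ^ (w j * (-v i)) := Finset.prod_comm
    _ = ∏ i, (∏ j, q j i ^ w j) ^ (-v i) := by
        refine Finset.prod_congr rfl fun i _ => ?_
        rw [← Finset.prod_zpow]
        refine Finset.prod_congr rfl fun j _ => ?_
        rw [← zpow_mul]

end Aux

/-- The assignment `R(γ_i, γ_j) = q_{ij}` extends to a well-defined unitary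
bicharacter on the abelian group `Γ_q = ⟨γ_1, …, γ_n⟩ ⊂ GLₙ(ℂ)`, where `γ_i`
is the diagonal matrix `diag(q_{i1}, …, q_{in})`. -/
theorem exists_bicharacter_on_Gamma_q (n : ℕ) (q : Fin n → Fin n → ℂ)
    (hdiag : ∀ i, q i i = 1) (hinv : ∀ i j, q i j * q j i = 1)
    (hne : ∀ i j, q i j ≠ 0)
    (γ : Fin n → (Matrix (Fin n) (Fin n) ℂ)ˣ)
    (hγ : ∀ i, (γ i : Matrix (Fin n) (Fin n) ℂ) = Matrix.diagonal (fun j => q i j)) :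
    ∃ R : Subgroup.closure (Set.range γ) → Subgroup.closure (Set.range γ) → ℂ,
      (∀ i j, R ⟨γ i, Subgroup.subset_closure (Set.mem_range_self i)⟩
          ⟨γ j, Subgroup.subset_closure (Set.mem_range_self j)⟩ = q i j) ∧
      (∀ a b c, R a (b * c) = R a b * R a c) ∧
      (∀ a b c, R (a * b) c = R a c * R b c) ∧
      (∀ a b, R a b * R b a = 1) := by
  classical
  set Γ := Subgroup.closure (Set.range γ) with hΓ
  -- a choice of exponent vector for each element of Γ
  have hex : ∀ x : Γ, ∃ v : Fin n → ℤ, Pd q hne v = (x : (Matrix (Fin n) (Fin n) ℂ)ˣ) :=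
    fun x => mem_closure_exists q hne γ hγ x.2
  choose σ hσ using hex
  -- diagonal entries of elements of Γ
  have hent : ∀ (x : Γ) (j : Fin n),
      ((x : (Matrix (Fin n) (Fin n) ℂ)ˣ) : Matrix (Fin n) (Fin n) ℂ) j j
        = ∏ i, q i j ^ σ x i := by
    intro x j
    rw [← hσ x, Pd_val, Matrix.diagonal_apply_eq]
  have hentne : ∀ (x : Γ) (j : Fin n),
      ((x : (Matrix (Fin n) (Fin n) ℂ)ˣ) : Matrix (Fin n) (Fin n) ℂ) j j ≠ 0 := by
    intro x j
    rw [hent]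
    exact Finset.prod_ne_zero_iff.2 fun i _ => zpow_ne_zero _ (hne i j)
  -- the bicharacter
  set R : Γ → Γ → ℂ := fun x y =>
    ∏ j, ((x : (Matrix (Fin n) (Fin n) ℂ)ˣ) : Matrix (Fin n) (Fin n) ℂ) j j ^ σ y j with hR
  -- well-definedness: R x y can be computed with any representation of y
  have hW : ∀ (x y : Γ) (w : Fin n → ℤ),
      Pd q hne w = (y : (Matrix (Fin n) (Fin n) ℂ)ˣ) →
      R x y = ∏ j, ((x : (Matrix (Fin n) (Fin n) ℂ)ˣ) : Matrix (Fin n) (Fin n) ℂ) j j ^ w j := by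
    intro x y w hw
    have hyent : ∀ i, ((y : (Matrix (Fin n) (Fin n) ℂ)ˣ) : Matrix (Fin n) (Fin n) ℂ) i i
        = ∏ j, q j i ^ w j := by
      intro i
      rw [← hw, Pd_val, Matrix.diagonal_apply_eq]
    calc R x y = ∏ j, (∏ i, q i j ^ σ x i) ^ σ y j := by
          rw [hR]
          exact Finset.prod_congr rfl fun j _ => by rw [hent]
      _ = ∏ i, (∏ j, q j i ^ σ y j) ^ (-σ x i) := key q hinv _ _
      _ = ∏ i, (∏ j, q j i ^ w j) ^ (-σ x i) := by
          refine Finset.prod_congr rfl fun i _ => ?_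
          rw [← hent y i, hyent i]
      _ = ∏ j, (∏ i, q i j ^ σ x i) ^ w j := (key q hinv _ _).symm
      _ = ∏ j, ((x : (Matrix (Fin n) (Fin n) ℂ)ˣ) : Matrix (Fin n) (Fin n) ℂ) j j ^ w j :=
          Finset.prod_congr rfl fun j _ => by rw [hent]
  refine ⟨R, ?_, ?_, ?_, ?_⟩
  · -- R γ_i γ_j = q i j
    intro i j
    rw [hW _ _ (Pi.single j 1) (Pd_single q hne γ hγ j)]
    rw [Finset.prod_eq_single j (fun b _ hb => by simp [Pi.single_eq_of_ne hb])
      (fun h => absurd (Finset.mem_univ j) h)]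
    simp [hγ i]
  · -- multiplicative in second argument
    intro a b c
    have hbc : Pd q hne (σ b + σ c) = ((b * c : Γ) : (Matrix (Fin n) (Fin n) ℂ)ˣ) := by
      rw [Pd_add, hσ b, hσ c]; rfl
    rw [hW _ _ _ hbc, hR]
    simp only
    rw [← Finset.prod_mul_distrib]
    refine Finset.prod_congr rfl fun j _ => ?_
    rw [Pi.add_apply, zpow_add₀ (hentne a j)]
  · -- multiplicative in first argument
    intro a b c
    have hab : ∀ j, (((a * b : Γ) : (Matrix (Fin n) (Fin n) ℂ)ˣ) : Matrix (Fin n) (Fin n) ℂ) j j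
        = ((a : (Matrix (Fin n) (Fin n) ℂ)ˣ) : Matrix (Fin n) (Fin n) ℂ) j j *
          ((b : (Matrix (Fin n) (Fin n) ℂ)ˣ) : Matrix (Fin n) (Fin n) ℂ) j j := by
      intro j
      have : ((a * b : Γ) : (Matrix (Fin n) (Fin n) ℂ)ˣ) = (a : (Matrix (Fin n) (Fin n) ℂ)ˣ) * b := rfl
      rw [this, Units.val_mul, ← hσ a, ← hσ b, Pd_val, Pd_val, Matrix.diagonal_mul_diagonal]
      simp
    rw [hR]
    simp only
    rw [← Finset.prod_mul_distrib]
    refine Finset.prod_congr rfl fun j _ => ?_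
    rw [hab j, mul_zpow]
  · -- unitarity
    intro a b
    have h1 : R a b = ∏ i, ((b : (Matrix (Fin n) (Fin n) ℂ)ˣ) : Matrix (Fin n) (Fin n) ℂ) i i
        ^ (-σ a i) := by
      calc R a b = ∏ j, (∏ i, q i j ^ σ a i) ^ σ b j := by
            rw [hR]
            exact Finset.prod_congr rfl fun j _ => by rw [hent]
        _ = ∏ i, (∏ j, q j i ^ σ b j) ^ (-σ a i) := key q hinv _ _
        _ = _ := Finset.prod_congr rfl fun i _ => by rw [hent b]
    rw [h1, hR]
    simp only
    rw [← Finset.prod_mul_distrib]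
    refine Finset.prod_eq_one fun j _ => ?_
    rw [← zpow_add₀ (hentne b j), neg_add_cancel, zpow_zero]
end

section
/- Let A_β(0,0) be the algebra generated by a finite-dimensional W-module V, its dual V*, and the group W, with relations w v w⁻¹ = w(v), w f w⁻¹ = w(f), and f v − v f = β(f⊗v) ∈ ℂW for v∈V, f∈V*, w∈W. If A_β(0,0) has triangular decomposition T(V) ⊗ ℂW ⊗ T(V*) (i.e. the multiplication map from this tensor product is a linear isomorphism onto A_β(0,0)), then β is W-equivariant: β(w(f)⊗w(v)) = w β(f⊗v) w⁻¹ for all w∈W, f∈V*, v∈V. -/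
open TensorProduct

lemma aux_tensor_inj (V : Type) [AddCommGroup V] [Module ℂ V] (W : Type) [Group W]
    (b₁ b₂ : MonoidAlgebra ℂ W)
    (h : (1 : TensorAlgebra ℂ V) ⊗ₜ[ℂ] (b₁ ⊗ₜ[ℂ] (1 : TensorAlgebra ℂ (Module.Dual ℂ V))) =
      (1 : TensorAlgebra ℂ V) ⊗ₜ[ℂ] (b₂ ⊗ₜ[ℂ] (1 : TensorAlgebra ℂ (Module.Dual ℂ V)))) :
    b₁ = b₂ := by
  let εV : TensorAlgebra ℂ V →ₐ[ℂ] ℂ := TensorAlgebra.algebraMapInv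
  let εF : TensorAlgebra ℂ (Module.Dual ℂ V) →ₐ[ℂ] ℂ := TensorAlgebra.algebraMapInv
  let ψ₁ : (MonoidAlgebra ℂ W) ⊗[ℂ] (TensorAlgebra ℂ (Module.Dual ℂ V)) →ₗ[ℂ] MonoidAlgebra ℂ W :=
    (TensorProduct.rid ℂ _).toLinearMap ∘ₗ LinearMap.lTensor _ εF.toLinearMap
  let ψ : (TensorAlgebra ℂ V) ⊗[ℂ] ((MonoidAlgebra ℂ W) ⊗[ℂ] (TensorAlgebra ℂ (Module.Dual ℂ V)))
      →ₗ[ℂ] MonoidAlgebra ℂ W :=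
    ψ₁ ∘ₗ (TensorProduct.lid ℂ _).toLinearMap ∘ₗ LinearMap.rTensor _ εV.toLinearMap
  have := congrArg ψ h
  simpa [ψ, ψ₁, εV, εF] using this

/-- If the algebra `A_β(0,0)` (generated by `V`, `V*` and `W` with relations
`w v w⁻¹ = w(v)`, `w f w⁻¹ = w(f)`, `f v − v f = β(f ⊗ v)`) has triangular
decomposition `T(V) ⊗ ℂW ⊗ T(V*)`, then `β` is `W`-equivariant. -/
theorem triangular_implies_equivariant
    (W : Type) [Group W] (V : Type) [AddCommGroup V] [Module ℂ V]
    [FiniteDimensional ℂ V]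
    (ρ : Representation ℂ W V)
    (β : (Module.Dual ℂ V) ⊗[ℂ] V →ₗ[ℂ] MonoidAlgebra ℂ W)
    (A : Type) [Ring A] [Algebra ℂ A]
    (φV : TensorAlgebra ℂ V →ₐ[ℂ] A)
    (φW : MonoidAlgebra ℂ W →ₐ[ℂ] A)
    (φF : TensorAlgebra ℂ (Module.Dual ℂ V) →ₐ[ℂ] A)
    (hrel1 : ∀ (w : W) (v : V),
      φW (MonoidAlgebra.of ℂ W w) * φV (TensorAlgebra.ι ℂ v) =
        φV (TensorAlgebra.ι ℂ (ρ w v)) * φW (MonoidAlgebra.of ℂ W w))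
    (hrel2 : ∀ (w : W) (f : Module.Dual ℂ V),
      φW (MonoidAlgebra.of ℂ W w) * φF (TensorAlgebra.ι ℂ f) =
        φF (TensorAlgebra.ι ℂ (ρ.dual w f)) * φW (MonoidAlgebra.of ℂ W w))
    (hrel3 : ∀ (f : Module.Dual ℂ V) (v : V),
      φF (TensorAlgebra.ι ℂ f) * φV (TensorAlgebra.ι ℂ v) -
        φV (TensorAlgebra.ι ℂ v) * φF (TensorAlgebra.ι ℂ f) = φW (β (f ⊗ₜ[ℂ] v)))
    (Φ : (TensorAlgebra ℂ V) ⊗[ℂ]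
        ((MonoidAlgebra ℂ W) ⊗[ℂ] (TensorAlgebra ℂ (Module.Dual ℂ V))) →ₗ[ℂ] A)
    (hΦ : ∀ a b c, Φ (a ⊗ₜ[ℂ] (b ⊗ₜ[ℂ] c)) = φV a * φW b * φF c)
    (hbij : Function.Bijective Φ) :
    ∀ (w : W) (f : Module.Dual ℂ V) (v : V),
      β ((ρ.dual w f) ⊗ₜ[ℂ] (ρ w v)) =
        MonoidAlgebra.of ℂ W w * β (f ⊗ₜ[ℂ] v) * MonoidAlgebra.of ℂ W w⁻¹ := by
  have hinj : Function.Injective φW := by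
    intro b₁ b₂ h
    apply aux_tensor_inj V W
    apply hbij.1
    rw [hΦ, hΦ, map_one, map_one, h]
  intro w f v
  apply hinj
  set Ww := φW (MonoidAlgebra.of ℂ W w) with hWw
  set Wi := φW (MonoidAlgebra.of ℂ W w⁻¹) with hWi
  have hWWi : Ww * Wi = 1 := by
    rw [hWw, hWi, ← map_mul, ← map_mul]
    simp [← MonoidAlgebra.one_def]
  set F := φF (TensorAlgebra.ι ℂ f)
  set Vv := φV (TensorAlgebra.ι ℂ v)
  set F' := φF (TensorAlgebra.ι ℂ (ρ.dual w f))
  set V' := φV (TensorAlgebra.ι ℂ (ρ w v))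
  have h1 : Ww * Vv = V' * Ww := hrel1 w v
  have h2 : Ww * F = F' * Ww := hrel2 w f
  have key : φW (β (ρ.dual w f ⊗ₜ[ℂ] ρ w v)) = F' * V' - V' * F' := (hrel3 _ _).symm
  rw [key, map_mul, map_mul, ← hWw, ← hWi, ← hrel3 f v]
  have : (F' * V' - V' * F') * (Ww * Wi) = Ww * (F * Vv - Vv * F) * Wi := by
    rw [← mul_assoc]
    congr 1
    rw [mul_sub, sub_mul, mul_assoc F' V' Ww, ← h1, ← mul_assoc F' Ww Vv, ← h2,
      mul_assoc V' F' Ww, ← h2, ← mul_assoc V' Ww F, ← h1]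
    simp [mul_assoc]
  rw [← this, hWWi, mul_one]
end

section
/- Let β = Σ_{w∈W} δ_w ⊗ L_w with L_w ∈ End(V) be a W-equivariant map V*⊗V → ℂW, giving the free braided double Ã_β. Then a quadratic tensor Σ u⊗v ∈ V⊗V commutes with all elements of V* in Ã_β if and only if it lies in the intersection over w∈W of the kernels of the operators T_w⁻ ∈ End(V⊗V) defined by T_w⁻(u⊗v) = (L_w⊗id)(u⊗w(v) + v⊗u). -/
set_option maxHeartbeats 1000000
set_option synthInstance.maxHeartbeats 100000


open TensorProduct

/-- If all contractions `(f ⊗ id) x` vanish, then `x = 0` (finite-dimensional `V`). -/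
lemma aux_tensor_sep (V : Type) [AddCommGroup V] [Module ℂ V] [FiniteDimensional ℂ V]
    (x : V ⊗[ℂ] V)
    (h : ∀ f : Module.Dual ℂ V,
      TensorProduct.map f (LinearMap.id : V →ₗ[ℂ] V) x = 0) : x = 0 := by
  classical
  let b := Module.finBasis ℂ V
  let bt := b.tensorProduct b
  have hrepr : ∀ i j, bt.repr x (i, j) = 0 := by
    intro i j
    have hcomp : ∀ y : V ⊗[ℂ] V,
        bt.repr y (i, j) =
          b.repr ((TensorProduct.lid ℂ V)
            (TensorProduct.map (b.coord i) (LinearMap.id : V →ₗ[ℂ] V) y)) j := by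
      intro y
      induction y using TensorProduct.induction_on with
      | zero => simp
      | tmul u v =>
          simp [bt, Module.Basis.tensorProduct_repr_tmul_apply, TensorProduct.map_tmul,
            TensorProduct.lid_tmul, Module.Basis.coord_apply, smul_eq_mul, mul_comm]
      | add y z hy hz =>
          simp only [map_add, Finsupp.add_apply, hy, hz]
    rw [hcomp x, h (b.coord i)]
    simp
  have hzero : bt.repr x = 0 := by
    ext p
    rcases p with ⟨i, j⟩
    simpa using hrepr i j
  exact (LinearEquiv.map_eq_zero_iff bt.repr).mp hzero

/-- In a free braided double `Ã_β` with `β(f ⊗ v) = Σ_w ⟨L_w(v), f⟩ w`, a quadratic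
tensor `t ∈ V ⊗ V` commutes with all elements of `V*` iff `t` lies in the
intersection of the kernels of the operators `T_w⁻(u ⊗ v) = (L_w ⊗ id)(u ⊗ w(v) + v ⊗ u)`. -/
theorem quadratic_commutes_iff_ker
    (W : Type) [Group W] (V : Type) [AddCommGroup V] [Module ℂ V]
    [FiniteDimensional ℂ V]
    (ρ : Representation ℂ W V)
    (L : W → (V →ₗ[ℂ] V)) (hLfin : (Function.support L).Finite)
    (hLequiv : ∀ g w : W, L (g * w * g⁻¹) = ρ g ∘ₗ L w ∘ₗ ρ g⁻¹)
    (A : Type) [Ring A] [Algebra ℂ A]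
    (φV : TensorAlgebra ℂ V →ₐ[ℂ] A)
    (φW : MonoidAlgebra ℂ W →ₐ[ℂ] A)
    (φF : TensorAlgebra ℂ (Module.Dual ℂ V) →ₐ[ℂ] A)
    (hrel1 : ∀ (w : W) (v : V),
      φW (MonoidAlgebra.of ℂ W w) * φV (TensorAlgebra.ι ℂ v) =
        φV (TensorAlgebra.ι ℂ (ρ w v)) * φW (MonoidAlgebra.of ℂ W w))
    (hrel2 : ∀ (w : W) (f : Module.Dual ℂ V),
      φW (MonoidAlgebra.of ℂ W w) * φF (TensorAlgebra.ι ℂ f) =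
        φF (TensorAlgebra.ι ℂ (ρ.dual w f)) * φW (MonoidAlgebra.of ℂ W w))
    (hrel3 : ∀ (f : Module.Dual ℂ V) (v : V),
      φF (TensorAlgebra.ι ℂ f) * φV (TensorAlgebra.ι ℂ v) -
        φV (TensorAlgebra.ι ℂ v) * φF (TensorAlgebra.ι ℂ f) =
          ∑ᶠ w : W, f (L w v) • φW (MonoidAlgebra.of ℂ W w))
    (Φ : (TensorAlgebra ℂ V) ⊗[ℂ]
        ((MonoidAlgebra ℂ W) ⊗[ℂ] (TensorAlgebra ℂ (Module.Dual ℂ V))) →ₗ[ℂ] A)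
    (hΦ : ∀ a b c, Φ (a ⊗ₜ[ℂ] (b ⊗ₜ[ℂ] c)) = φV a * φW b * φF c)
    (hbij : Function.Bijective Φ)
    (μ2 : V ⊗[ℂ] V →ₗ[ℂ] A)
    (hμ2 : ∀ u v : V, μ2 (u ⊗ₜ[ℂ] v) = φV (TensorAlgebra.ι ℂ u) * φV (TensorAlgebra.ι ℂ v))
    (T : W → (V ⊗[ℂ] V →ₗ[ℂ] V ⊗[ℂ] V))
    (hT : ∀ (w : W) (u v : V),
      T w (u ⊗ₜ[ℂ] v) =
        TensorProduct.map (L w) LinearMap.id (u ⊗ₜ[ℂ] (ρ w v) + v ⊗ₜ[ℂ] u)) :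
    ∀ t : V ⊗[ℂ] V,
      (∀ f : Module.Dual ℂ V,
        φF (TensorAlgebra.ι ℂ f) * μ2 t = μ2 t * φF (TensorAlgebra.ι ℂ f)) ↔
      ∀ w : W, T w t = 0 := by
  classical
  intro t
  set s : Finset W := hLfin.toFinset with hs
  -- the "contraction" operator `E w f = lid ∘ (f ⊗ id) ∘ T w`
  let E : W → Module.Dual ℂ V → (V ⊗[ℂ] V →ₗ[ℂ] V) := fun w f =>
    (TensorProduct.lid ℂ V).toLinearMap ∘ₗ
      TensorProduct.map f LinearMap.id ∘ₗ T w
  have hE : ∀ (w : W) (f : Module.Dual ℂ V) (u v : V),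
      E w f (u ⊗ₜ[ℂ] v) = f (L w u) • ρ w v + f (L w v) • u := by
    intro w f u v
    simp [E, hT w u v, TensorProduct.map_tmul, TensorProduct.lid_tmul]
  -- support estimate for the finsums in hrel3
  have hsupp : ∀ v : V, ∀ f : Module.Dual ℂ V,
      Function.support (fun w => f (L w v) • φW (MonoidAlgebra.of ℂ W w)) ⊆ (s : Set W) := by
    intro v f w hw
    simp only [Function.mem_support] at hw
    have hLw : L w ≠ 0 := by
      intro h0
      apply hw
      simp [h0]
    simpa [hs, hLfin.mem_toFinset] using hLw
  -- the key commutator identity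
  have key : ∀ (f : Module.Dual ℂ V) (x : V ⊗[ℂ] V),
      φF (TensorAlgebra.ι ℂ f) * μ2 x - μ2 x * φF (TensorAlgebra.ι ℂ f) =
        ∑ w ∈ s, φV (TensorAlgebra.ι ℂ (E w f x)) * φW (MonoidAlgebra.of ℂ W w) := by
    intro f x
    induction x using TensorProduct.induction_on with
    | zero => simp
    | tmul u v =>
        have expand : φF (TensorAlgebra.ι ℂ f) *
              (φV (TensorAlgebra.ι ℂ u) * φV (TensorAlgebra.ι ℂ v)) -
            (φV (TensorAlgebra.ι ℂ u) * φV (TensorAlgebra.ι ℂ v)) * φF (TensorAlgebra.ι ℂ f) =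
            (φF (TensorAlgebra.ι ℂ f) * φV (TensorAlgebra.ι ℂ u) -
              φV (TensorAlgebra.ι ℂ u) * φF (TensorAlgebra.ι ℂ f)) * φV (TensorAlgebra.ι ℂ v) +
            φV (TensorAlgebra.ι ℂ u) * (φF (TensorAlgebra.ι ℂ f) * φV (TensorAlgebra.ι ℂ v) -
              φV (TensorAlgebra.ι ℂ v) * φF (TensorAlgebra.ι ℂ f)) := by
          noncomm_ring
        rw [hμ2, expand, hrel3, hrel3,
          finsum_eq_sum_of_support_subset _ (hsupp u f),
          finsum_eq_sum_of_support_subset _ (hsupp v f),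
          Finset.sum_mul, Finset.mul_sum, ← Finset.sum_add_distrib]
        refine Finset.sum_congr rfl fun w _ => ?_
        rw [smul_mul_assoc, hrel1, mul_smul_comm, hE]
        simp [map_add, add_mul, smul_mul_assoc]
    | add x y hx hy =>
        rw [map_add]
        calc φF (TensorAlgebra.ι ℂ f) * (μ2 x + μ2 y) -
              (μ2 x + μ2 y) * φF (TensorAlgebra.ι ℂ f)
            = (φF (TensorAlgebra.ι ℂ f) * μ2 x - μ2 x * φF (TensorAlgebra.ι ℂ f)) +
              (φF (TensorAlgebra.ι ℂ f) * μ2 y - μ2 y * φF (TensorAlgebra.ι ℂ f)) := by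
              noncomm_ring
          _ = _ := by
              rw [hx, hy, ← Finset.sum_add_distrib]
              refine Finset.sum_congr rfl fun w _ => ?_
              simp only [map_add, add_mul]
  -- extraction via the triangular decomposition
  have extract : ∀ g : W → V,
      (∑ w ∈ s, φV (TensorAlgebra.ι ℂ (g w)) * φW (MonoidAlgebra.of ℂ W w)) = 0 →
      ∀ w ∈ s, g w = 0 := by
    intro g hg w0 hw0
    have hΦsum : Φ (∑ w ∈ s, TensorAlgebra.ι ℂ (g w) ⊗ₜ[ℂ]
        ((MonoidAlgebra.of ℂ W w : MonoidAlgebra ℂ W) ⊗ₜ[ℂ]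
          (1 : TensorAlgebra ℂ (Module.Dual ℂ V)))) = Φ 0 := by
      rw [map_sum Φ _ s, Φ.map_zero]
      simpa [hΦ] using hg
    have hsum0 := hbij.injective hΦsum
    let χ : MonoidAlgebra ℂ W →ₗ[ℂ] ℂ := Finsupp.lapply w0 ∘ₗ (MonoidAlgebra.coeffLinearEquiv ℂ).toLinearMap
    let π : TensorAlgebra ℂ (Module.Dual ℂ V) →ₗ[ℂ] ℂ :=
      (TensorAlgebra.algebraMapInv).toLinearMap
    let inner : (MonoidAlgebra ℂ W) ⊗[ℂ] (TensorAlgebra ℂ (Module.Dual ℂ V)) →ₗ[ℂ] ℂ :=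
      (TensorProduct.lid ℂ ℂ).toLinearMap ∘ₗ TensorProduct.map χ π
    let Ψ : (TensorAlgebra ℂ V) ⊗[ℂ]
        ((MonoidAlgebra ℂ W) ⊗[ℂ] (TensorAlgebra ℂ (Module.Dual ℂ V))) →ₗ[ℂ]
          TensorAlgebra ℂ V :=
      (TensorProduct.rid ℂ (TensorAlgebra ℂ V)).toLinearMap ∘ₗ
        TensorProduct.map LinearMap.id inner
    have hΨ := congrArg Ψ hsum0
    rw [map_sum Ψ _ s, Ψ.map_zero] at hΨ
    have hterm : ∀ w : W, Ψ (TensorAlgebra.ι ℂ (g w) ⊗ₜ[ℂ]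
        ((MonoidAlgebra.of ℂ W w : MonoidAlgebra ℂ W) ⊗ₜ[ℂ]
          (1 : TensorAlgebra ℂ (Module.Dual ℂ V)))) =
        (if w = w0 then (1 : ℂ) else 0) • TensorAlgebra.ι ℂ (g w) := by
      intro w
      have hχ : χ (MonoidAlgebra.single w (1 : ℂ)) = if w = w0 then (1 : ℂ) else 0 := by
        show (Finsupp.single w (1 : ℂ)) w0 = _
        rw [Finsupp.single_apply]
      have hπ : π (1 : TensorAlgebra ℂ (Module.Dual ℂ V)) = 1 := by
        simp [π]
      simp [Ψ, inner, TensorProduct.map_tmul, TensorProduct.lid_tmul,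
        TensorProduct.rid_tmul, hχ, hπ, smul_smul, ite_smul, one_smul, zero_smul]
    rw [Finset.sum_congr rfl (fun w _ => hterm w)] at hΨ
    have hsingle : (∑ w ∈ s, (if w = w0 then (1 : ℂ) else 0) • TensorAlgebra.ι ℂ (g w)) =
        TensorAlgebra.ι ℂ (g w0) := by
      rw [Finset.sum_eq_single w0]
      · simp
      · intro w _ hne
        simp [hne]
      · intro h
        exact absurd hw0 h
    rw [hsingle] at hΨ
    exact (TensorAlgebra.ι_eq_zero_iff ℂ _).mp hΨ
  -- T w vanishes when L w = 0
  have hTzero : ∀ w : W, L w = 0 → T w t = 0 := by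
    intro w hw
    induction t using TensorProduct.induction_on with
    | zero => simp
    | tmul u v => simp [hT, hw, TensorProduct.map_tmul]
    | add x y hx hy => simp [map_add, hx, hy]
  constructor
  · intro hcomm w
    have hzero : ∀ f : Module.Dual ℂ V, ∀ w ∈ s, E w f t = 0 := by
      intro f
      apply extract
      rw [← key f t, hcomm f, sub_self]
    by_cases hws : w ∈ s
    · apply aux_tensor_sep
      intro f
      have h1 := hzero f w hws
      simp only [E, LinearMap.comp_apply, LinearEquiv.coe_coe] at h1
      exact (LinearEquiv.map_eq_zero_iff _).mp h1
    · apply hTzero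
      have : ¬ L w ≠ 0 := by
        simpa [hs, hLfin.mem_toFinset, Function.mem_support] using hws
      exact not_not.mp this
  · intro hker f
    have h := key f t
    rw [Finset.sum_eq_zero] at h
    · exact sub_eq_zero.mp h
    · intro w _
      simp [E, hker w]
end

section
/- Let 𝒞'⊆𝒞 be finite subgroups of ℂ× with −1 ∈ 𝒞, and let W_{𝒞,𝒞'} ≤ GL_n(ℂ) be the group generated by all σ_{ij}^{(ε)} (ε∈𝒞, i≠j) and all t_i^{(ε')} (ε'∈𝒞'). If n ≥ 3, then for every ε ∈ 𝒞, the element t_1^{(ε^{-1})} t_3^{(ε)} lies in W_{𝒞,𝒞'}. -/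
/-- The matrix of `σ_{ij}^{(ε)}`. -/
noncomputable def sigmaMat (n : ℕ) (i j : Fin n) (ε : ℂ) : Matrix (Fin n) (Fin n) ℂ :=
  Matrix.of fun k l =>
    if l = i ∧ k = j then ε
    else if l = j ∧ k = i then -ε⁻¹
    else if k = l ∧ k ≠ i ∧ k ≠ j then 1 else 0

/-- The matrix of `t_i^{(ε)}`. -/
noncomputable def tMat (n : ℕ) (i : Fin n) (ε : ℂ) : Matrix (Fin n) (Fin n) ℂ :=
  Matrix.diagonal (fun k => if k = i then ε else 1)

lemma sigma_apply (n : ℕ) (i j : Fin n) (hij : i ≠ j) (ε : ℂ) (k m : Fin n) :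
    sigmaMat n i j ε k m =
      (if k = i then -ε⁻¹ else if k = j then ε else 1) *
        (if m = (if k = i then j else if k = j then i else k) then 1 else 0) := by
  simp only [sigmaMat, Matrix.of_apply]
  by_cases hki : k = i
  · subst hki
    by_cases hmj : m = j <;> simp [hmj, hij, Ne.symm hij]
  · by_cases hkj : k = j
    · subst hkj
      by_cases hmi : m = i <;> simp [hmi, hki, hij, Ne.symm hij]
    · by_cases hmk : m = k
      · subst hmk; simp [hki, hkj, Ne.symm hki, Ne.symm hkj]
      · simp [hki, hkj, hmk, Ne.symm hmk]

lemma sigma_mul_neg_one (n : ℕ) (i j : Fin n) (hij : i ≠ j) (ε : ℂ) :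
    sigmaMat n i j ε * sigmaMat n i j (-1) =
      Matrix.diagonal (fun k => if k = i then ε⁻¹ else if k = j then ε else 1) := by
  ext k l
  rw [Matrix.mul_apply]
  have hterm : ∀ m : Fin n, sigmaMat n i j ε k m * sigmaMat n i j (-1) m l =
      if m = (if k = i then j else if k = j then i else k) then
        (if k = i then -ε⁻¹ else if k = j then ε else 1) * sigmaMat n i j (-1) m l else 0 := by
    intro m
    rw [sigma_apply n i j hij]
    by_cases h : m = (if k = i then j else if k = j then i else k) <;> simp [h]
  rw [Finset.sum_congr rfl fun m _ => hterm m, Finset.sum_ite_eq' Finset.univ]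
  simp only [Finset.mem_univ, if_true]
  by_cases hki : k = i
  · subst hki
    rw [if_pos rfl, if_pos rfl, sigma_apply n k j hij]
    simp only [Ne.symm hij, if_neg (Ne.symm hij), if_pos rfl]
    by_cases hlk : l = k
    · simp [hlk, Matrix.diagonal_apply]
    · simp [hlk, Ne.symm hlk, Matrix.diagonal_apply]
  · by_cases hkj : k = j
    · subst hkj
      rw [if_neg hki, if_pos rfl, if_neg hki, if_pos rfl, sigma_apply n i k hij]
      simp only [if_pos rfl]
      by_cases hlk : l = k
      · simp [hlk, Matrix.diagonal_apply, hki, Ne.symm hij]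
      · simp [hlk, Ne.symm hlk, Matrix.diagonal_apply, hki]
    · rw [if_neg hki, if_neg hkj, if_neg hki, if_neg hkj, sigma_apply n i j hij]
      simp only [if_neg hki, if_neg hkj]
      by_cases hlk : l = k
      · simp [hlk, Matrix.diagonal_apply, hki, hkj]
      · simp [hlk, Ne.symm hlk, Matrix.diagonal_apply, hki, hkj]

lemma t_mul_t (n : ℕ) (i j : Fin n) (hij : i ≠ j) (ε : ℂ) :
    tMat n i ε⁻¹ * tMat n j ε =
      Matrix.diagonal (fun k => if k = i then ε⁻¹ else if k = j then ε else 1) := by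
  rw [tMat, tMat, Matrix.diagonal_mul_diagonal]
  have : (fun k => (if k = i then ε⁻¹ else 1) * (if k = j then ε else 1)) =
      (fun k => if k = i then ε⁻¹ else if k = j then ε else 1) := by
    funext k
    by_cases hki : k = i
    · simp [hki, hij]
    · by_cases hkj : k = j <;> simp [hki, hkj, Ne.symm hij]
  rw [this]

/-- For `n ≥ 3` and any `ε ∈ 𝒞`, the element `t_1^{(ε⁻¹)} t_3^{(ε)}` lies in the
group `W_{𝒞,𝒞'}` generated by the `σ_{ij}^{(ε)}` (`ε ∈ 𝒞`) and `t_i^{(ε')}`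
(`ε' ∈ 𝒞'`). -/
theorem t1_t3_mem_W (n : ℕ) (hn : 3 ≤ n)
    (C C' : Subgroup ℂˣ) (hCfin : (C : Set ℂˣ).Finite) (hC'fin : (C' : Set ℂˣ).Finite)
    (hsub : C' ≤ C) (hneg : (-1 : ℂˣ) ∈ C)
    (σ : Fin n → Fin n → ℂˣ → (Matrix (Fin n) (Fin n) ℂ)ˣ)
    (t : Fin n → ℂˣ → (Matrix (Fin n) (Fin n) ℂ)ˣ)
    (hσ : ∀ i j ε, i ≠ j → (σ i j ε : Matrix (Fin n) (Fin n) ℂ) = sigmaMat n i j (ε : ℂ))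
    (ht : ∀ i ε, (t i ε : Matrix (Fin n) (Fin n) ℂ) = tMat n i (ε : ℂ)) :
    ∀ ε : ℂˣ, ε ∈ C →
      t ⟨0, by omega⟩ ε⁻¹ * t ⟨2, by omega⟩ ε ∈
        Subgroup.closure
          ({g | ∃ i j ε', i ≠ j ∧ ε' ∈ C ∧ g = σ i j ε'} ∪
            {g | ∃ i ε', ε' ∈ C' ∧ g = t i ε'}) := by
  intro ε hε
  set i0 : Fin n := ⟨0, by omega⟩
  set i2 : Fin n := ⟨2, by omega⟩
  have h02 : i0 ≠ i2 := by simp [i0, i2, Fin.ext_iff]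
  have key : t i0 ε⁻¹ * t i2 ε = σ i0 i2 ε * σ i0 i2 (-1) := by
    apply Units.ext
    rw [Units.val_mul, Units.val_mul, hσ _ _ _ h02, hσ _ _ _ h02, ht, ht]
    have h1 : ((ε⁻¹ : ℂˣ) : ℂ) = ((ε : ℂ))⁻¹ := by simp
    have h2 : (((-1 : ℂˣ)) : ℂ) = (-1 : ℂ) := by simp
    rw [h1, h2, sigma_mul_neg_one n i0 i2 h02, t_mul_t n i0 i2 h02]
  rw [key]
  apply mul_mem
  · exact Subgroup.subset_closure (Or.inl ⟨i0, i2, ε, h02, hε, rfl⟩)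
  · exact Subgroup.subset_closure (Or.inl ⟨i0, i2, -1, h02, hneg, rfl⟩)
end

section
/- Let 𝒞'⊆𝒞 be finite subgroups of ℂ× with −1∈𝒞, |𝒞'| even. Then W_{𝒞,𝒞'} = G(m,p,n), where m = |𝒞|, p = |𝒞/𝒞'|, and G(m,p,n) = S_n ⋉ T(m,p,n) with T(m,p,n) = {diag(ε_1,...,ε_n) : ε_i^m = 1 for all i, (ε_1⋯ε_n)^{m/p} = 1}. -/
namespace WGmpnAux

variable {n : ℕ}

/-- monomial matrix -/
def mono (π : Equiv.Perm (Fin n)) (d : Fin n → ℂ) : Matrix (Fin n) (Fin n) ℂ :=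
  Matrix.of fun k l => if k = π l then d l else 0

lemma mono_mul (π τ : Equiv.Perm (Fin n)) (d e : Fin n → ℂ) :
    mono π d * mono τ e = mono (π * τ) (fun l => d (τ l) * e l) := by
  ext k l
  simp only [mono, Matrix.mul_apply, Matrix.of_apply]
  rw [Finset.sum_eq_single (τ l)]
  · simp only [if_pos rfl, Equiv.Perm.mul_apply]
    by_cases h : k = π (τ l) <;> simp [h]
  · intro b _ hb
    simp [hb]
  · simp

lemma mono_one : mono (1 : Equiv.Perm (Fin n)) (fun _ => (1 : ℂ)) = 1 := by
  ext k l
  simp only [mono, Matrix.of_apply, Matrix.one_apply, Equiv.Perm.one_apply]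
  by_cases h : k = l <;> simp [h]

lemma val_inv_mono (g : (Matrix (Fin n) (Fin n) ℂ)ˣ) (π : Equiv.Perm (Fin n))
    (e : Fin n → ℂ) (he : ∀ l, e l ≠ 0) (hval : (↑g : Matrix (Fin n) (Fin n) ℂ) = mono π e) :
    (↑g⁻¹ : Matrix (Fin n) (Fin n) ℂ) = mono π⁻¹ (fun l => (e (π⁻¹ l))⁻¹) := by
  have key : (↑g : Matrix (Fin n) (Fin n) ℂ) * mono π⁻¹ (fun l => (e (π⁻¹ l))⁻¹) = 1 := by
    rw [hval, mono_mul, mul_inv_cancel]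
    have : (fun l => e (π⁻¹ l) * (e (π⁻¹ l))⁻¹) = fun _ : Fin n => (1 : ℂ) :=
      funext fun l => mul_inv_cancel₀ (he _)
    rw [this, mono_one]
  calc (↑g⁻¹ : Matrix (Fin n) (Fin n) ℂ)
      = ↑g⁻¹ * ((↑g : Matrix (Fin n) (Fin n) ℂ) * mono π⁻¹ (fun l => (e (π⁻¹ l))⁻¹)) := by
        rw [key, mul_one]
    _ = mono π⁻¹ (fun l => (e (π⁻¹ l))⁻¹) := by
        rw [← mul_assoc, Units.inv_mul, one_mul]

lemma sigma_eq_mono (i j : Fin n) (hij : i ≠ j) (ε : ℂ) :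
    sigmaMat n i j ε =
      mono (Equiv.swap i j) (fun l => if l = i then ε else if l = j then -ε⁻¹ else 1) := by
  ext k l
  simp only [sigmaMat, mono, Matrix.of_apply]
  by_cases hli : l = i
  · subst hli
    simp only [Equiv.swap_apply_left, hij, hij.symm, and_false, false_and, if_false, and_true, true_and, ne_eq]
    split_ifs with h1 h2 <;> tauto
  · by_cases hlj : l = j
    · subst hlj
      simp only [Equiv.swap_apply_right, hij, hij.symm, hli, and_false, false_and, if_false, and_true, true_and, ne_eq]
      split_ifs with h1 h2 <;> tauto
    · rw [Equiv.swap_apply_of_ne_of_ne hli hlj]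
      simp only [hli, hlj, if_neg, if_false]
      by_cases hkl : k = l
      · subst hkl
        simp [hli, hlj]
      · simp [hkl, fun h : l = i ∧ k = j => hli h.1, fun h : l = j ∧ k = i => hlj h.1]

lemma t_eq_mono (i : Fin n) (ε : ℂ) :
    tMat n i ε = mono 1 (fun k => if k = i then ε else 1) := by
  ext k l
  simp only [tMat, mono, Matrix.of_apply, Matrix.diagonal_apply, Equiv.Perm.one_apply]
  by_cases hkl : k = l
  · subst hkl; simp
  · simp [hkl, Ne.symm hkl]

/-- the group `G(m,p,n)` with `r = m / p` -/
def Gmpn (n m r : ℕ) (hm : 0 < m) : Subgroup (Matrix (Fin n) (Fin n) ℂ)ˣ where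
  carrier := {g | ∃ π : Equiv.Perm (Fin n), ∃ d : Fin n → ℂ,
    (∀ l, d l ^ m = 1) ∧ (∏ l, d l) ^ r = 1 ∧ (↑g : Matrix (Fin n) (Fin n) ℂ) = mono π d}
  mul_mem' := by
    rintro a b ⟨π, d, hd, hdp, ha⟩ ⟨τ, e, he, hep, hb⟩
    refine ⟨π * τ, fun l => d (τ l) * e l, fun l => by rw [mul_pow, hd, he, one_mul], ?_, ?_⟩
    · rw [Finset.prod_mul_distrib, Equiv.prod_comp τ d, mul_pow, hdp, hep, one_mul]
    · rw [Units.val_mul, ha, hb, mono_mul]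
  one_mem' := ⟨1, fun _ => 1, fun _ => one_pow m, by rw [Finset.prod_const_one, one_pow],
    by rw [Units.val_one, mono_one]⟩
  inv_mem' := by
    rintro g ⟨π, d, hd, hdp, hg⟩
    have hne : ∀ l, d l ≠ 0 := fun l h0 => by
      have := hd l; rw [h0, zero_pow hm.ne'] at this; exact zero_ne_one this
    refine ⟨π⁻¹, fun l => (d (π⁻¹ l))⁻¹, fun l => ?_, ?_, val_inv_mono g π d hne hg⟩
    · dsimp only
      rw [inv_pow, hd, inv_one]
    · dsimp only
      rw [Finset.prod_inv_distrib, Equiv.prod_comp π⁻¹ d, inv_pow, hdp, inv_one]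

end WGmpnAux

open WGmpnAux in
/-- If `|𝒞'|` is even then `W_{𝒞,𝒞'} = G(m,p,n)` with `m = |𝒞|`, `p = |𝒞/𝒞'|`,
where `G(m,p,n) = S_n ⋉ T(m,p,n)` is realised as the group of monomial matrices
`x_l ↦ d_l x_{π(l)}` with `d_l^m = 1` and `(d_1 ⋯ d_n)^{m/p} = 1`. -/
theorem W_eq_Gmpn_even (n : ℕ) (hn : 2 ≤ n)
    (C C' : Subgroup ℂˣ) (hCfin : (C : Set ℂˣ).Finite) (hC'fin : (C' : Set ℂˣ).Finite)
    (hsub : C' ≤ C) (hneg : (-1 : ℂˣ) ∈ C) (heven : Even (Nat.card C'))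
    (σ : Fin n → Fin n → ℂˣ → (Matrix (Fin n) (Fin n) ℂ)ˣ)
    (t : Fin n → ℂˣ → (Matrix (Fin n) (Fin n) ℂ)ˣ)
    (hσ : ∀ i j ε, i ≠ j → (σ i j ε : Matrix (Fin n) (Fin n) ℂ) = sigmaMat n i j (ε : ℂ))
    (ht : ∀ i ε, (t i ε : Matrix (Fin n) (Fin n) ℂ) = tMat n i (ε : ℂ)) :
    let m := Nat.card C
    let p := m / Nat.card C'
    (↑(Subgroup.closure
        ({g | ∃ i j ε', i ≠ j ∧ ε' ∈ C ∧ g = σ i j ε'} ∪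
          {g | ∃ i ε', ε' ∈ C' ∧ g = t i ε'})) : Set ((Matrix (Fin n) (Fin n) ℂ)ˣ)) =
      {g : (Matrix (Fin n) (Fin n) ℂ)ˣ | ∃ π : Equiv.Perm (Fin n), ∃ d : Fin n → ℂ,
        (∀ l, d l ^ m = 1) ∧ (∏ l, d l) ^ (m / p) = 1 ∧
        (↑g : Matrix (Fin n) (Fin n) ℂ) =
          Matrix.of fun k l => if k = π l then d l else 0} := by
  intro m p
  classical
  haveI : Finite C := hCfin.to_subtype
  haveI : Finite C' := hC'fin.to_subtype
  have hm0 : 0 < m := Nat.card_pos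
  have hr0 : 0 < Nat.card C' := Nat.card_pos
  have hrdvd : Nat.card C' ∣ m := Subgroup.card_dvd_of_le hsub
  have hq : m / p = Nat.card C' := Nat.div_div_self hrdvd hm0.ne'
  haveI : NeZero m := ⟨hm0.ne'⟩
  haveI : NeZero (Nat.card C') := ⟨hr0.ne'⟩
  have hq0 : 0 < m / p := hq ▸ hr0
  have hCeq : C = rootsOfUnity m ℂ := by
    refine Subgroup.eq_of_le_of_card_ge ?_ ?_
    · intro x hx
      rw [mem_rootsOfUnity]
      have h1 : (⟨x, hx⟩ : C) ^ m = 1 := pow_card_eq_one'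
      have h2 := Subtype.ext_iff.1 h1
      rw [SubmonoidClass.coe_pow, OneMemClass.coe_one] at h2
      exact h2
    · rw [Complex.card_rootsOfUnity]
  have hC'eq : C' = rootsOfUnity (Nat.card C') ℂ := by
    refine Subgroup.eq_of_le_of_card_ge ?_ ?_
    · intro x hx
      rw [mem_rootsOfUnity]
      have h1 : (⟨x, hx⟩ : C') ^ Nat.card C' = 1 := pow_card_eq_one'
      have h2 := Subtype.ext_iff.1 h1
      rw [SubmonoidClass.coe_pow, OneMemClass.coe_one] at h2
      exact h2
    · rw [Complex.card_rootsOfUnity]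
  have hmemC : ∀ x : ℂˣ, x ∈ C ↔ (x : ℂ) ^ m = 1 := by
    intro x
    have h1 := mem_rootsOfUnity' m x
    rw [← hCeq] at h1
    exact h1
  have hmemC' : ∀ x : ℂˣ, x ∈ C' ↔ (x : ℂ) ^ (m / p) = 1 := by
    intro x
    have h1 := mem_rootsOfUnity' (Nat.card C') x
    rw [← hC'eq] at h1
    rw [hq]
    exact h1
  have hneg1 : (-1 : ℂ) ^ m = 1 := by
    have := (hmemC (-1)).1 hneg
    simpa using this
  have hnegq : (-1 : ℂ) ^ (m / p) = 1 := by
    rw [hq]; exact heven.neg_one_pow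
  set S : Set ((Matrix (Fin n) (Fin n) ℂ)ˣ) :=
    ({g | ∃ i j ε', i ≠ j ∧ ε' ∈ C ∧ g = σ i j ε'} ∪
      {g | ∃ i ε', ε' ∈ C' ∧ g = t i ε'}) with hSdef
  -- the subgroup G(m,p,n)
  have hSsub : S ⊆ ↑(Gmpn n m (m / p) hm0) := by
    rintro g (⟨i, j, ε, hij, hεC, rfl⟩ | ⟨i, ε, hεC', rfl⟩)
    · refine ⟨Equiv.swap i j,
        fun l => if l = i then (ε : ℂ) else if l = j then -(ε : ℂ)⁻¹ else 1, ?_, ?_, ?_⟩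
      · intro l; dsimp only
        split_ifs with h1 h2
        · exact (hmemC ε).1 hεC
        · rw [neg_pow, inv_pow, (hmemC ε).1 hεC, inv_one, hneg1, mul_one]
        · exact one_pow m
      · have hprod : (∏ l, (if l = i then (ε : ℂ) else if l = j then -(ε : ℂ)⁻¹ else 1))
            = -1 := by
          calc (∏ l, (if l = i then (ε : ℂ) else if l = j then -(ε : ℂ)⁻¹ else 1))
              = ∏ l, ((if l = i then (ε : ℂ) else 1) * (if l = j then -(ε : ℂ)⁻¹ else 1)) := by
                refine Finset.prod_congr rfl fun l _ => ?_
                by_cases h1 : l = i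
                · simp [h1, hij]
                · by_cases h2 : l = j
                  · simp [h1, h2, Ne.symm hij]
                  · simp [h1, h2]
            _ = -1 := by
                rw [Finset.prod_mul_distrib, Finset.prod_ite_eq', Finset.prod_ite_eq',
                  if_pos (Finset.mem_univ i), if_pos (Finset.mem_univ j), mul_neg,
                  mul_inv_cancel₀ (Units.ne_zero ε)]
        rw [hprod]; exact hnegq
      · rw [hσ i j ε hij, sigma_eq_mono i j hij]
    · refine ⟨1, fun k => if k = i then (ε : ℂ) else 1, ?_, ?_, ?_⟩
      · intro l; dsimp only
        split_ifs with h1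
        · exact (hmemC ε).1 (hsub hεC')
        · exact one_pow m
      · rw [Finset.prod_ite_eq', if_pos (Finset.mem_univ i)]
        exact (hmemC' ε).1 hεC'
      · rw [ht i ε, t_eq_mono]
  have hσH : ∀ (i j : Fin n) (ε : ℂˣ), i ≠ j → ε ∈ C → σ i j ε ∈ Subgroup.closure S :=
    fun i j ε hij hε => Subgroup.subset_closure (Or.inl ⟨i, j, ε, hij, hε, rfl⟩)
  have htH : ∀ (i : Fin n) (ε : ℂˣ), ε ∈ C' → t i ε ∈ Subgroup.closure S :=
    fun i ε hε => Subgroup.subset_closure (Or.inr ⟨i, ε, hε, rfl⟩)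
  -- diagonal pair elements
  have hD : ∀ (i j : Fin n), i ≠ j → ∀ α : ℂˣ, α ∈ C →
      ∃ X ∈ Subgroup.closure S, (↑X : Matrix (Fin n) (Fin n) ℂ) =
        mono 1 (fun l => if l = i then (α : ℂ) else if l = j then (α : ℂ)⁻¹ else 1) := by
    intro i j hij α hα
    have hαC : (-α) ∈ C := by
      rw [show (-α) = (-1) * α from (neg_one_mul α).symm]
      exact mul_mem hneg hα
    refine ⟨σ i j 1 * σ i j (-α),
      mul_mem (hσH i j 1 hij (one_mem C)) (hσH i j (-α) hij hαC), ?_⟩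
    rw [Units.val_mul, hσ i j 1 hij, hσ i j (-α) hij, sigma_eq_mono i j hij,
      sigma_eq_mono i j hij, mono_mul, Equiv.swap_mul_self]
    apply congrArg (mono (1 : Equiv.Perm (Fin n)))
    funext l
    by_cases h1 : l = i
    · simp [h1, Equiv.swap_apply_left, hij, Ne.symm hij, Units.val_neg]
    · by_cases h2 : l = j
      · have hji : j ≠ i := fun hh => h1 (h2.trans hh)
        simp [h2, Equiv.swap_apply_right, h1, Units.val_neg, inv_neg, hji]
      · simp [Equiv.swap_apply_of_ne_of_ne h1 h2, h1, h2]
  -- all admissible diagonal matrices lie in the closure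
  have hdiag : ∀ f : Fin n → ℂ, (∀ l, f l ^ m = 1) → (∏ l, f l) ^ (m / p) = 1 →
      ∀ X : (Matrix (Fin n) (Fin n) ℂ)ˣ,
        (↑X : Matrix (Fin n) (Fin n) ℂ) = mono 1 f → X ∈ Subgroup.closure S := by
    intro f hf hfp X hX
    have hfne : ∀ l, f l ≠ 0 := fun l h0 => by
      have := hf l; rw [h0, zero_pow hm0.ne'] at this; exact zero_ne_one this
    set z : Fin n := ⟨n - 1, by omega⟩ with hz
    have claim : ∀ s : Finset (Fin n), z ∉ s →
        ∃ h ∈ Subgroup.closure S, (↑h : Matrix (Fin n) (Fin n) ℂ) =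
          mono 1 (fun l => if l ∈ s then f l
            else if l = z then (∏ j ∈ s, f j)⁻¹ else 1) := by
      intro s
      induction s using Finset.induction_on with
      | empty =>
        intro _
        refine ⟨1, one_mem _, ?_⟩
        rw [Units.val_one, ← mono_one]
        apply congrArg (mono (1 : Equiv.Perm (Fin n)))
        funext l
        simp
      | @insert a s ha ih =>
        intro hzs
        have haz : a ≠ z := fun h => hzs (h ▸ Finset.mem_insert_self a s)
        have hzs' : z ∉ s := fun h => hzs (Finset.mem_insert_of_mem h)
        obtain ⟨h, hH, hhval⟩ := ih hzs'
        have hfa : (Units.mk0 (f a) (hfne a)) ∈ C :=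
          (hmemC _).2 (by rw [Units.val_mk0]; exact hf a)
        obtain ⟨X2, hX2H, hX2val⟩ := hD a z haz (Units.mk0 (f a) (hfne a)) hfa
        refine ⟨h * X2, mul_mem hH hX2H, ?_⟩
        rw [Units.val_mul, hhval, hX2val, mono_mul, one_mul]
        apply congrArg (mono (1 : Equiv.Perm (Fin n)))
        funext l
        simp only [Equiv.Perm.one_apply, Units.val_mk0]
        by_cases h1 : l = a
        · simp [h1, ha, haz]
        · by_cases h2 : l = z
          · simp [h2, hzs', hzs, Ne.symm haz, Finset.prod_insert ha, mul_inv_rev, mul_comm,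
              Finset.mem_insert]
          · by_cases h3 : l ∈ s
            · simp [Finset.mem_insert, h1, h2, h3]
            · simp [Finset.mem_insert, h1, h2, h3]
    obtain ⟨h, hH, hhval⟩ := claim (Finset.univ.erase z) (Finset.notMem_erase z _)
    have hPne : (∏ l, f l) ≠ 0 := Finset.prod_ne_zero_iff.2 fun l _ => hfne l
    have hPC' : (Units.mk0 (∏ l, f l) hPne) ∈ C' :=
      (hmemC' _).2 (by rw [Units.val_mk0]; exact hfp)
    have hXeq : X = h * t z (Units.mk0 (∏ l, f l) hPne) := by
      apply Units.ext
      rw [hX, Units.val_mul, hhval, ht, t_eq_mono, mono_mul, one_mul]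
      apply congrArg (mono (1 : Equiv.Perm (Fin n)))
      funext l
      simp only [Equiv.Perm.one_apply, Units.val_mk0]
      by_cases h2 : l = z
      · subst h2
        simp only [Finset.notMem_erase, not_false_eq_true, ↓reduceIte]
        rw [← Finset.mul_prod_erase Finset.univ f (Finset.mem_univ z)]
        have hez : (∏ j ∈ Finset.univ.erase z, f j) ≠ 0 :=
          Finset.prod_ne_zero_iff.2 fun l _ => hfne l
        field_simp
      · simp [h2]
    rw [hXeq]
    exact mul_mem hH (htH z _ hPC')
  -- permutation part
  have hperm : ∀ π : Equiv.Perm (Fin n), ∃ e : Fin n → ℂ,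
      (∀ l, e l ^ m = 1) ∧ (∏ l, e l) ^ (m / p) = 1 ∧
      ∃ h ∈ Subgroup.closure S, (↑h : Matrix (Fin n) (Fin n) ℂ) = mono π e := by
    intro π
    refine Equiv.Perm.swap_induction_on π ?_ ?_
    · exact ⟨fun _ => 1, fun _ => one_pow m, by rw [Finset.prod_const_one, one_pow],
        1, one_mem _, by rw [Units.val_one, mono_one]⟩
    · rintro f i j hij ⟨e, he, hep, h, hH, hval⟩
      refine ⟨fun l => (if f l = i then (1 : ℂ)
          else if f l = j then -(1 : ℂ)⁻¹ else 1) * e l, ?_, ?_,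
        σ i j 1 * h, mul_mem (hσH i j 1 hij (one_mem C)) hH, ?_⟩
      · intro l; dsimp only
        rw [mul_pow, he, mul_one]
        split_ifs with h1 h2
        · exact one_pow m
        · rw [inv_one]; exact hneg1
        · exact one_pow m
      · dsimp only
        rw [Finset.prod_mul_distrib, mul_pow, hep, mul_one]
        have hcomp : (∏ l, (if f l = i then (1 : ℂ) else if f l = j then -(1 : ℂ)⁻¹ else 1))
            = ∏ x, (if x = i then (1 : ℂ) else if x = j then -(1 : ℂ)⁻¹ else 1) :=
          Equiv.prod_comp f (fun x => if x = i then (1 : ℂ) else if x = j then -(1 : ℂ)⁻¹ else 1)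
        rw [hcomp]
        have hprod : (∏ x, (if x = i then (1 : ℂ) else if x = j then -(1 : ℂ)⁻¹ else 1))
            = -1 := by
          calc (∏ x, (if x = i then (1 : ℂ) else if x = j then -(1 : ℂ)⁻¹ else 1))
              = ∏ x, ((if x = i then (1 : ℂ) else 1) * (if x = j then -(1 : ℂ)⁻¹ else 1)) := by
                refine Finset.prod_congr rfl fun x _ => ?_
                by_cases h1 : x = i
                · simp [h1, hij]
                · by_cases h2 : x = j
                  · simp [h1, h2, Ne.symm hij]
                  · simp [h1, h2]
            _ = -1 := by
                rw [Finset.prod_mul_distrib, Finset.prod_ite_eq', Finset.prod_ite_eq',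
                  if_pos (Finset.mem_univ i), if_pos (Finset.mem_univ j), one_mul,
                  inv_one]
        rw [hprod]
        exact hnegq
      · rw [Units.val_mul, hσ i j 1 hij, sigma_eq_mono i j hij, hval, mono_mul]
        apply congrArg (mono (Equiv.swap i j * f))
        funext l
        simp only [Units.val_one]
  -- final set equality
  ext g
  simp only [SetLike.mem_coe, Set.mem_setOf_eq]
  constructor
  · intro hg
    obtain ⟨π, d, h1, h2, h3⟩ := (Subgroup.closure_le (Gmpn n m (m / p) hm0)).2 hSsub hg
    exact ⟨π, d, h1, h2, h3⟩
  · rintro ⟨π, d, hd, hdp, hval⟩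
    have hval' : (↑g : Matrix (Fin n) (Fin n) ℂ) = mono π d := hval
    obtain ⟨e, he, hep, h, hH, hhval⟩ := hperm π
    have hene : ∀ l, e l ≠ 0 := fun l h0 => by
      have := he l; rw [h0, zero_pow hm0.ne'] at this; exact zero_ne_one this
    have hinv : (↑h⁻¹ : Matrix (Fin n) (Fin n) ℂ) =
        mono π⁻¹ (fun l => (e (π⁻¹ l))⁻¹) := val_inv_mono h π e hene hhval
    have hXval : (↑(h⁻¹ * g) : Matrix (Fin n) (Fin n) ℂ) =
        mono 1 (fun l => (e l)⁻¹ * d l) := by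
      rw [Units.val_mul, hinv, hval', mono_mul, inv_mul_cancel]
      apply congrArg (mono (1 : Equiv.Perm (Fin n)))
      funext l
      simp
    have hXmem := hdiag (fun l => (e l)⁻¹ * d l)
      (fun l => by rw [mul_pow, inv_pow, he, inv_one, one_mul]; exact hd l)
      (by rw [Finset.prod_mul_distrib, Finset.prod_inv_distrib, mul_pow, inv_pow, hep,
            inv_one, one_mul]
          exact hdp)
      (h⁻¹ * g) hXval
    have hgeq : g = h * (h⁻¹ * g) := by rw [← mul_assoc, mul_inv_cancel, one_mul]
    rw [hgeq]
    exact mul_mem hH hXmem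
end

section
/- Let 𝒞'⊆𝒞 be finite subgroups of ℂ× with −1∈𝒞 and |𝒞'| odd. Then W_{𝒞,𝒞'} = G(m,p,n)_+ := {g ∈ G(m,p,n) : det(g)^{|𝒞'|} = 1}, a subgroup of index 2 in G(m,p,n), where m = |𝒞| and p = |𝒞/(±𝒞')|. -/
/-! ### Auxiliary material on monomial matrices -/

noncomputable def matMon (n : ℕ) (π : Equiv.Perm (Fin n)) (d : Fin n → ℂ) :
    Matrix (Fin n) (Fin n) ℂ :=
  Matrix.of fun k l => if k = π l then d l else 0

lemma matMon_mul (n : ℕ) (π τ : Equiv.Perm (Fin n)) (d e : Fin n → ℂ) :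
    matMon n π d * matMon n τ e = matMon n (π * τ) (fun l => d (τ l) * e l) := by
  ext k l
  simp only [matMon, Matrix.mul_apply, Matrix.of_apply, ite_mul, zero_mul, mul_ite, mul_zero]
  rw [Finset.sum_eq_single (τ l)]
  · simp [Equiv.Perm.mul_apply]; split_ifs <;> simp_all
  · intro b _ hb; simp [hb]
  · simp

lemma matMon_one (n : ℕ) : matMon n 1 (fun _ => 1) = 1 := by
  ext k l
  simp [matMon, Matrix.one_apply, eq_comm]; split_ifs <;> simp_all

lemma matMon_eq_perm_mul (n : ℕ) (π : Equiv.Perm (Fin n)) (d : Fin n → ℂ) :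
    matMon n π d = (Equiv.Perm.permMatrix ℂ π⁻¹) * Matrix.diagonal d := by
  ext k l
  simp only [matMon, Matrix.of_apply, Matrix.mul_apply, Matrix.diagonal, Matrix.of_apply,
    Equiv.Perm.permMatrix, PEquiv.toMatrix, Equiv.toPEquiv, Option.mem_def]
  rw [Finset.sum_eq_single l]
  · by_cases h : k = π l
    · simp [h]
    · have h' : ¬ (π⁻¹ k = l) := fun hc => h (by simp [← hc])
      simp [h, h']
      intro hc; exact absurd hc h'
  · intro b _ hb; simp [hb]
  · simp

lemma matMon_det (n : ℕ) (π : Equiv.Perm (Fin n)) (d : Fin n → ℂ) :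
    (matMon n π d).det = (Equiv.Perm.sign π : ℂ) * ∏ l, d l := by
  rw [matMon_eq_perm_mul, Matrix.det_mul, Matrix.det_permutation, Matrix.det_diagonal]
  simp

noncomputable def sigD (n : ℕ) (i j : Fin n) (ε : ℂ) : Fin n → ℂ :=
  fun l => if l = i then ε else if l = j then -ε⁻¹ else 1

lemma sigmaMat_eq (n : ℕ) (i j : Fin n) (hij : i ≠ j) (ε : ℂ) :
    sigmaMat n i j ε = matMon n (Equiv.swap i j) (sigD n i j ε) := by
  ext k l
  simp only [sigmaMat, matMon, sigD, Matrix.of_apply, Equiv.swap_apply_def]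
  split_ifs <;> simp_all

lemma tMat_eq (n : ℕ) (i : Fin n) (ε : ℂ) :
    tMat n i ε = matMon n 1 (fun l => if l = i then ε else 1) := by
  ext k l
  by_cases h : k = l <;> simp [tMat, matMon, Matrix.diagonal, h]

lemma prod_sigD (n : ℕ) (i j : Fin n) (hij : i ≠ j) (ε : ℂ) (hε : ε ≠ 0) :
    ∏ l, sigD n i j ε l = -1 := by
  have : ∀ l, sigD n i j ε l =
      (if l = i then ε else 1) * (if l = j then -ε⁻¹ else 1) := by
    intro l
    rcases eq_or_ne l i with rfl | hli <;> rcases eq_or_ne l j with rfl | hlj <;>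
      simp_all [sigD]
  rw [Finset.prod_congr rfl (fun l _ => this l), Finset.prod_mul_distrib,
    Finset.prod_ite_eq' Finset.univ i (fun _ => ε),
    Finset.prod_ite_eq' Finset.univ j (fun _ => -ε⁻¹)]
  simp [mul_inv_cancel₀ hε]

lemma sigD_pow (n : ℕ) (i j : Fin n) (ε : ℂ) (m : ℕ) (hm : Even m) (hε : ε ^ m = 1) :
    ∀ l, sigD n i j ε l ^ m = 1 := by
  intro l
  have hinv : (ε⁻¹) ^ m = 1 := by rw [inv_pow, hε, inv_one]
  by_cases h1 : l = i
  · simpa [sigD, h1] using hε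
  · by_cases h2 : l = j
    · simp only [sigD, if_neg h1, if_pos h2]
      rw [hm.neg_pow, hinv]
    · simp [sigD, h1, h2]

lemma sigma_mul_sigma (n : ℕ) (i j : Fin n) (hij : i ≠ j) (ε : ℂ) :
    sigmaMat n i j ε * sigmaMat n j i 1 =
      matMon n 1 (fun l => if l = i then ε⁻¹ else if l = j then ε else 1) := by
  rw [sigmaMat_eq n i j hij ε, sigmaMat_eq n j i hij.symm 1, matMon_mul,
    show Equiv.swap i j * Equiv.swap j i = 1 by rw [Equiv.swap_comm i j, Equiv.swap_mul_self]]
  apply congrArg (matMon n 1)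
  funext l
  show sigD n i j ε ((Equiv.swap j i) l) * sigD n j i 1 l = _
  rcases eq_or_ne l i with rfl | hli
  · simp [sigD, Equiv.swap_apply_left, Equiv.swap_apply_right, hij, hij.symm]
  · rcases eq_or_ne l j with rfl | hlj
    · simp [sigD, Equiv.swap_apply_left, Equiv.swap_apply_right, hij, hij.symm]
    · simp [sigD, Equiv.swap_apply_of_ne_of_ne hlj hli, hli, hlj]

/-! ### Roots of unity -/

lemma card_rootsOfUnity_complex (k : ℕ) (hk : k ≠ 0) : Nat.card (rootsOfUnity k ℂ) = k := by
  haveI : NeZero k := ⟨hk⟩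
  exact (Complex.isPrimitiveRoot_exp k hk).card_rootsOfUnity

lemma eq_rootsOfUnity (C : Subgroup ℂˣ) (h : (C : Set ℂˣ).Finite) :
    C = rootsOfUnity (Nat.card C) ℂ := by
  haveI : Finite C := h.to_subtype
  have hm : Nat.card C ≠ 0 := Nat.card_pos.ne'
  have hle : C ≤ rootsOfUnity (Nat.card C) ℂ := by
    intro x hx
    rw [mem_rootsOfUnity]
    have h1 : (⟨x, hx⟩ : C) ^ Nat.card C = 1 := pow_card_eq_one'
    have h2 := congrArg Subtype.val h1
    rw [SubmonoidClass.coe_pow] at h2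
    exact h2
  refine le_antisymm hle ?_
  haveI : NeZero (Nat.card C) := ⟨hm⟩
  have e1 : ∀ (H : Subgroup ℂˣ), (H : Set ℂˣ).ncard = Nat.card H :=
    fun H => (Nat.card_coe_set_eq _).symm
  have := Set.eq_of_subset_of_ncard_le (t := (rootsOfUnity (Nat.card C) ℂ : Set ℂˣ))
    (s := (C : Set ℂˣ)) hle ?_ ?_
  · intro x hx; rw [← SetLike.mem_coe, ← this] at hx; exact hx
  · rw [e1, e1, card_rootsOfUnity_complex _ hm]
  · haveI : Finite (rootsOfUnity (Nat.card C) ℂ) := inferInstance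
    exact (rootsOfUnity (Nat.card C) ℂ : Set ℂˣ).toFinite

lemma mem_rootsOfUnity_val (k : ℕ) (x : ℂˣ) :
    x ∈ rootsOfUnity k ℂ ↔ (x : ℂ) ^ k = 1 := by
  rw [mem_rootsOfUnity]
  constructor
  · intro h
    have := congrArg Units.val h
    rwa [Units.val_pow_eq_pow_val] at this
  · intro h
    ext
    rwa [Units.val_pow_eq_pow_val]

lemma neg_one_or (x : ℂˣ) (hx : x ^ 2 = 1) : x = 1 ∨ x = -1 := by
  have : (x : ℂ) * (x : ℂ) = 1 := by
    have := congrArg Units.val hx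
    rw [Units.val_pow_eq_pow_val] at this
    rw [← sq]; exact this
  rcases mul_self_eq_one_iff.mp this with h | h
  · left; ext; simpa using h
  · right; ext; simpa using h

lemma sup_neg_one_eq (C' : Subgroup ℂˣ) (h : (C' : Set ℂˣ).Finite)
    (hodd : Odd (Nat.card C')) :
    C' ⊔ Subgroup.closure {(-1:ℂˣ)} = rootsOfUnity (2 * Nat.card C') ℂ := by
  set N := Nat.card C' with hN
  have hN0 : N ≠ 0 := by intro h0; rw [h0] at hodd; simp at hodd
  apply le_antisymm
  · apply sup_le
    · intro x hx
      rw [eq_rootsOfUnity C' h, mem_rootsOfUnity] at hx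
      rw [mem_rootsOfUnity, mul_comm, pow_mul, hx, one_pow]
    · rw [Subgroup.closure_le]
      intro x hx
      simp only [Set.mem_singleton_iff] at hx
      subst hx
      rw [SetLike.mem_coe, mem_rootsOfUnity, pow_mul, neg_one_sq, one_pow]
  · intro x hx
    rw [mem_rootsOfUnity] at hx
    have hcop : IsCoprime (2 : ℤ) (N : ℤ) := by
      have h2 : Nat.Coprime 2 N := Nat.coprime_two_left.mpr hodd
      exact_mod_cast Nat.isCoprime_iff_coprime.mpr h2
    obtain ⟨u, v, huv⟩ := hcop
    have hx1 : x = x ^ (u * 2) * x ^ (v * N) := by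
      rw [← zpow_add, huv, zpow_one]
    have h1 : x ^ (u * 2) ∈ C' := by
      rw [eq_rootsOfUnity C' h, mem_rootsOfUnity]
      rw [← zpow_natCast, ← zpow_mul]
      have : u * 2 * (N : ℤ) = (2 * N : ℕ) * u := by push_cast; ring
      rw [this, zpow_mul, zpow_natCast, hx, one_zpow]
    have h2 : x ^ (v * N) ∈ Subgroup.closure {(-1:ℂˣ)} := by
      have hsq : (x ^ (v * N)) ^ 2 = 1 := by
        rw [← zpow_natCast, ← zpow_mul]
        have : v * (N : ℤ) * ((2:ℕ) : ℤ) = (2 * N : ℕ) * v := by push_cast; ring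
        rw [this, zpow_mul, zpow_natCast, hx, one_zpow]
      rcases neg_one_or _ hsq with h' | h'
      · rw [h']; exact one_mem _
      · rw [h']; exact Subgroup.subset_closure rfl
    rw [hx1]
    exact mul_mem (le_sup_left (α := Subgroup ℂˣ) h1) (le_sup_right (α := Subgroup ℂˣ) h2)

lemma card_sup_neg_one (C' : Subgroup ℂˣ) (h : (C' : Set ℂˣ).Finite)
    (hodd : Odd (Nat.card C')) :
    Nat.card (C' ⊔ Subgroup.closure {(-1:ℂˣ)} : Subgroup ℂˣ) = 2 * Nat.card C' := by
  have hN0 : Nat.card C' ≠ 0 := by intro h0; rw [h0] at hodd; simp at hodd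
  rw [sup_neg_one_eq C' h hodd, card_rootsOfUnity_complex]
  simpa using hN0

/-! ### The monomial group -/

def IsMonom (n m q : ℕ) (g : (Matrix (Fin n) (Fin n) ℂ)ˣ) : Prop :=
  ∃ π : Equiv.Perm (Fin n), ∃ d : Fin n → ℂ,
    (∀ l, d l ^ m = 1) ∧ (∏ l, d l) ^ q = 1 ∧
    (↑g : Matrix (Fin n) (Fin n) ℂ) = matMon n π d

lemma isMonom_d_ne_zero {n : ℕ} {g : (Matrix (Fin n) (Fin n) ℂ)ˣ}
    {π : Equiv.Perm (Fin n)} {d : Fin n → ℂ}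
    (hg : (↑g : Matrix (Fin n) (Fin n) ℂ) = matMon n π d) (l : Fin n) : d l ≠ 0 := by
  have hdet : (↑g : Matrix (Fin n) (Fin n) ℂ).det ≠ 0 := by
    intro h
    have := Matrix.isUnit_iff_isUnit_det (↑g : Matrix (Fin n) (Fin n) ℂ) |>.mp g.isUnit
    rw [h] at this
    exact this.ne_zero rfl
  rw [hg, matMon_det] at hdet
  intro h0
  apply hdet
  rw [Finset.prod_eq_zero (Finset.mem_univ l) h0, mul_zero]

lemma isMonom_mul {n m q : ℕ} {g h : (Matrix (Fin n) (Fin n) ℂ)ˣ}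
    (hg : IsMonom n m q g) (hh : IsMonom n m q h) : IsMonom n m q (g * h) := by
  obtain ⟨π, d, hd1, hd2, hd3⟩ := hg
  obtain ⟨τ, e, he1, he2, he3⟩ := hh
  refine ⟨π * τ, fun l => d (τ l) * e l, ?_, ?_, ?_⟩
  · intro l; rw [mul_pow, hd1, he1, one_mul]
  · rw [Finset.prod_mul_distrib, Equiv.prod_comp τ d, mul_pow, hd2, he2, one_mul]
  · rw [Units.val_mul, hd3, he3, matMon_mul]

lemma isMonom_one {n m q : ℕ} : IsMonom n m q (1 : (Matrix (Fin n) (Fin n) ℂ)ˣ) :=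
  ⟨1, fun _ => 1, fun _ => one_pow m, by simp, by rw [Units.val_one, matMon_one]⟩

lemma isMonom_inv {n m q : ℕ} {g : (Matrix (Fin n) (Fin n) ℂ)ˣ}
    (hg : IsMonom n m q g) : IsMonom n m q g⁻¹ := by
  obtain ⟨π, d, hd1, hd2, hd3⟩ := hg
  have hne : ∀ l, d l ≠ 0 := isMonom_d_ne_zero hd3
  refine ⟨π⁻¹, fun l => (d (π⁻¹ l))⁻¹, ?_, ?_, ?_⟩
  · intro l
    show (d (π⁻¹ l))⁻¹ ^ m = 1
    rw [inv_pow, hd1, inv_one]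
  · show (∏ l, (d (π⁻¹ l))⁻¹) ^ q = 1
    rw [Finset.prod_inv_distrib,
      show (∏ l, (d (π⁻¹ l))) = ∏ l, d l from Equiv.prod_comp π⁻¹ d,
      inv_pow, hd2, inv_one]
  · apply Units.inv_eq_of_mul_eq_one_right
    rw [hd3, matMon_mul]
    rw [show (fun l => d (π⁻¹ l) * (d (π⁻¹ l))⁻¹) = (fun _ : Fin n => (1:ℂ)) from
      funext fun l => mul_inv_cancel₀ (hne _)]
    rw [mul_inv_cancel]
    exact matMon_one n

lemma isMonom_det_sq {n m q N : ℕ} {g : (Matrix (Fin n) (Fin n) ℂ)ˣ}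
    (hq : q = 2 * N) (hg : IsMonom n m q g) :
    ((↑g : Matrix (Fin n) (Fin n) ℂ).det) ^ N = 1 ∨
    ((↑g : Matrix (Fin n) (Fin n) ℂ).det) ^ N = -1 := by
  obtain ⟨π, d, hd1, hd2, hd3⟩ := hg
  have hsign : (Equiv.Perm.sign π : ℂ) = 1 ∨ (Equiv.Perm.sign π : ℂ) = -1 := by
    rcases Int.units_eq_one_or (Equiv.Perm.sign π) with h | h <;> simp [h]
  have key : (((↑g : Matrix (Fin n) (Fin n) ℂ).det) ^ N) *
      (((↑g : Matrix (Fin n) (Fin n) ℂ).det) ^ N) = 1 := by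
    rw [hd3, matMon_det, ← pow_add, mul_pow]
    have : N + N = 2 * N := by ring
    rw [this, ← hq, hd2, mul_one]
    rcases hsign with h | h <;> rw [h]
    · exact one_pow _
    · rw [hq]; rw [pow_mul]; norm_num
  exact mul_self_eq_one_iff.mp key

noncomputable def Gplus (n m q N : ℕ) : Subgroup (Matrix (Fin n) (Fin n) ℂ)ˣ where
  carrier := {g | IsMonom n m q g ∧ ((↑g : Matrix (Fin n) (Fin n) ℂ).det) ^ N = 1}
  mul_mem' := by
    rintro a b ⟨ha, ha2⟩ ⟨hb, hb2⟩
    refine ⟨isMonom_mul ha hb, ?_⟩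
    rw [Units.val_mul, Matrix.det_mul, mul_pow, ha2, hb2, one_mul]
  one_mem' := ⟨isMonom_one, by simp⟩
  inv_mem' := by
    rintro a ⟨ha, ha2⟩
    refine ⟨isMonom_inv ha, ?_⟩
    have h1 : (↑a : Matrix (Fin n) (Fin n) ℂ).det *
        (↑a⁻¹ : Matrix (Fin n) (Fin n) ℂ).det = 1 := by
      rw [← Matrix.det_mul, ← Units.val_mul, mul_inv_cancel, Units.val_one, Matrix.det_one]
    have := congrArg (· ^ N) h1
    simp only [mul_pow, one_pow] at this
    rw [ha2, one_mul] at this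
    exact this

/-- If `|𝒞'|` is odd then `W_{𝒞,𝒞'} = G(m,p,n)_+ = {g ∈ G(m,p,n) : det(g)^{|𝒞'|} = 1}`,
a subgroup of index 2 in `G(m,p,n)`, where `m = |𝒞|` and `p = |𝒞/(±𝒞')|`. -/
theorem W_eq_Gmpn_plus_odd (n : ℕ) (hn : 2 ≤ n)
    (C C' : Subgroup ℂˣ) (hCfin : (C : Set ℂˣ).Finite) (hC'fin : (C' : Set ℂˣ).Finite)
    (hsub : C' ≤ C) (hneg : (-1 : ℂˣ) ∈ C) (hodd : Odd (Nat.card C'))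
    (σ : Fin n → Fin n → ℂˣ → (Matrix (Fin n) (Fin n) ℂ)ˣ)
    (t : Fin n → ℂˣ → (Matrix (Fin n) (Fin n) ℂ)ˣ)
    (hσ : ∀ i j ε, i ≠ j → (σ i j ε : Matrix (Fin n) (Fin n) ℂ) = sigmaMat n i j (ε : ℂ))
    (ht : ∀ i ε, (t i ε : Matrix (Fin n) (Fin n) ℂ) = tMat n i (ε : ℂ)) :
    let m := Nat.card C
    let p := m / Nat.card (C' ⊔ Subgroup.closure {(-1 : ℂˣ)} : Subgroup ℂˣ)
    let Gmpn : Set ((Matrix (Fin n) (Fin n) ℂ)ˣ) :=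
      {g : (Matrix (Fin n) (Fin n) ℂ)ˣ | ∃ π : Equiv.Perm (Fin n), ∃ d : Fin n → ℂ,
        (∀ l, d l ^ m = 1) ∧ (∏ l, d l) ^ (m / p) = 1 ∧
        (↑g : Matrix (Fin n) (Fin n) ℂ) =
          Matrix.of fun k l => if k = π l then d l else 0}
    let Wset : Set ((Matrix (Fin n) (Fin n) ℂ)ˣ) :=
      ↑(Subgroup.closure
        ({g | ∃ i j ε', i ≠ j ∧ ε' ∈ C ∧ g = σ i j ε'} ∪
          {g | ∃ i ε', ε' ∈ C' ∧ g = t i ε'}))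
    Wset = {g : (Matrix (Fin n) (Fin n) ℂ)ˣ |
        g ∈ Gmpn ∧ (Matrix.det (↑g : Matrix (Fin n) (Fin n) ℂ)) ^ (Nat.card C') = 1} ∧
      Nat.card Gmpn = 2 * Nat.card Wset := by
  intro m p Gmpn Wset
  haveI : Finite C := hCfin.to_subtype
  haveI : Finite C' := hC'fin.to_subtype
  have hm0 : m ≠ 0 := Nat.card_pos.ne'
  have hN0 : Nat.card C' ≠ 0 := Nat.card_pos.ne'
  have hCroots : C = rootsOfUnity m ℂ := eq_rootsOfUnity C hCfin
  have hC'roots : C' = rootsOfUnity (Nat.card C') ℂ := eq_rootsOfUnity C' hC'fin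
  have hmemC : ∀ x : ℂˣ, x ∈ C ↔ (x : ℂ) ^ m = 1 := by
    intro x
    conv_lhs => rw [hCroots]
    exact mem_rootsOfUnity_val m x
  have hmemC' : ∀ x : ℂˣ, x ∈ C' ↔ (x : ℂ) ^ (Nat.card C') = 1 := by
    intro x
    conv_lhs => rw [hC'roots]
    exact mem_rootsOfUnity_val _ x
  have hsupcard : Nat.card (C' ⊔ Subgroup.closure {(-1:ℂˣ)} : Subgroup ℂˣ)
      = 2 * Nat.card C' := card_sup_neg_one C' hC'fin hodd
  have hsuple : (C' ⊔ Subgroup.closure {(-1:ℂˣ)} : Subgroup ℂˣ) ≤ C :=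
    sup_le hsub ((Subgroup.closure_le C).mpr (by simpa using hneg))
  have hdvd : 2 * Nat.card C' ∣ m := by
    have := Subgroup.card_dvd_of_le hsuple
    rwa [hsupcard] at this
  have hq : m / p = 2 * Nat.card C' := by
    show m / (m / Nat.card (C' ⊔ Subgroup.closure {(-1:ℂˣ)} : Subgroup ℂˣ)) = _
    rw [hsupcard]
    exact Nat.div_div_self hdvd hm0
  have hEvenm : Even m := by
    by_contra hodd'
    rw [Nat.not_even_iff_odd] at hodd'
    have h1 : ((-1 : ℂˣ) : ℂ) ^ m = 1 := (hmemC _).mp hneg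
    rw [Units.val_neg, Units.val_one, hodd'.neg_one_pow] at h1
    norm_num at h1
  set S : Set ((Matrix (Fin n) (Fin n) ℂ)ˣ) :=
    ({g | ∃ i j ε', i ≠ j ∧ ε' ∈ C ∧ g = σ i j ε'} ∪
      {g | ∃ i ε', ε' ∈ C' ∧ g = t i ε'}) with hSdef
  have hW : Wset = ↑(Subgroup.closure S) := rfl
  -- membership of generators in `Gplus`
  have hmain : Subgroup.closure S = Gplus n m (m / p) (Nat.card C') := by
    apply le_antisymm
    · rw [Subgroup.closure_le]
      rintro x (⟨i, j, ε, hij, hεC, rfl⟩ | ⟨i, ε, hεC', rfl⟩)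
      · have hval : (↑(σ i j ε) : Matrix (Fin n) (Fin n) ℂ)
            = matMon n (Equiv.swap i j) (sigD n i j (ε : ℂ)) := by
          rw [hσ i j ε hij, sigmaMat_eq n i j hij]
        have hεm : (ε : ℂ) ^ m = 1 := (hmemC ε).mp hεC
        refine ⟨⟨Equiv.swap i j, sigD n i j (ε : ℂ),
          sigD_pow n i j _ m hEvenm hεm, ?_, hval⟩, ?_⟩
        · rw [prod_sigD n i j hij _ (Units.ne_zero ε), hq, pow_mul]
          norm_num
        · rw [hval, matMon_det, prod_sigD n i j hij _ (Units.ne_zero ε),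
            Equiv.Perm.sign_swap hij]
          norm_num
      · have hval : (↑(t i ε) : Matrix (Fin n) (Fin n) ℂ)
            = matMon n 1 (fun l => if l = i then (ε : ℂ) else 1) := by
          rw [ht i ε, tMat_eq]
        have hεm : (ε : ℂ) ^ m = 1 := (hmemC ε).mp (hsub hεC')
        have hεN : (ε : ℂ) ^ (Nat.card C') = 1 := (hmemC' ε).mp hεC'
        have hprod : (∏ l, if l = i then (ε : ℂ) else 1) = (ε : ℂ) := by
          rw [Finset.prod_ite_eq' Finset.univ i (fun _ => (ε : ℂ))]
          simp
        refine ⟨⟨1, _, ?_, ?_, hval⟩, ?_⟩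
        · intro l; by_cases h : l = i <;> simp [h, hεm]
        · rw [hprod, hq, mul_comm, pow_mul, hεN, one_pow]
        · rw [hval, matMon_det, hprod]
          simp [hεN]
    · -- hard direction
      have hD : ∀ (i j : Fin n) (ε : ℂˣ), i ≠ j → ε ∈ C →
          σ i j ε * σ j i 1 ∈ Subgroup.closure S ∧
          (↑(σ i j ε * σ j i 1) : Matrix (Fin n) (Fin n) ℂ) =
            matMon n 1 (fun l => if l = i then (ε : ℂ)⁻¹ else if l = j then (ε : ℂ) else 1) := by
        intro i j ε hij hεC
        constructor
        · exact mul_mem (Subgroup.subset_closure (Or.inl ⟨i, j, ε, hij, hεC, rfl⟩))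
            (Subgroup.subset_closure (Or.inl ⟨j, i, 1, hij.symm, one_mem C, rfl⟩))
        · rw [Units.val_mul, hσ i j ε hij, hσ j i 1 hij.symm, Units.val_one]
          exact sigma_mul_sigma n i j hij (ε : ℂ)
      have hdiagaux : ∀ (s : Finset (Fin n)) (i0 : Fin n), i0 ∉ s →
          ∀ (e : Fin n → ℂ), (∀ l, e l ≠ 0) → (∀ l, e l ^ m = 1) →
          ∃ u : (Matrix (Fin n) (Fin n) ℂ)ˣ, u ∈ Subgroup.closure S ∧
            (↑u : Matrix (Fin n) (Fin n) ℂ) =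
              matMon n 1 (fun k => if k ∈ s then e k
                else if k = i0 then (∏ l ∈ s, e l)⁻¹ else 1) := by
        intro s
        induction s using Finset.cons_induction with
        | empty =>
          intro i0 _ e he0 hem
          refine ⟨1, one_mem _, ?_⟩
          rw [Units.val_one, ← matMon_one n]
          apply congrArg (matMon n 1)
          funext k
          simp
        | cons a s' ha ih =>
          intro i0 hi0 e he0 hem
          have hi0s' : i0 ∉ s' := fun h => hi0 (Finset.mem_cons_of_mem h)
          have hai0 : a ≠ i0 := fun h => hi0 (h ▸ Finset.mem_cons_self a s')
          obtain ⟨u, huH, huval⟩ := ih i0 hi0s' e he0 hem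
          have hεC : Units.mk0 (e a) (he0 a) ∈ C := (hmemC _).mpr (by simpa using hem a)
          obtain ⟨hDmem, hDval⟩ := hD i0 a (Units.mk0 (e a) (he0 a)) (Ne.symm hai0) hεC
          refine ⟨u * (σ i0 a (Units.mk0 (e a) (he0 a)) * σ a i0 1),
            mul_mem huH hDmem, ?_⟩
          rw [Units.val_mul, huval, hDval, matMon_mul, one_mul]
          apply congrArg (matMon n 1)
          funext k
          simp only [Equiv.Perm.coe_one, id_eq, Units.val_mk0]
          by_cases hks : k ∈ s'
          · have hki : k ≠ i0 := fun h => hi0s' (h ▸ hks)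
            have hka : k ≠ a := fun h => ha (h ▸ hks)
            simp [hks, hki, hka, Finset.mem_cons]
          · by_cases hki : k = i0
            · subst hki
              simp [hks, hi0, hai0.symm, Finset.prod_insert ha, mul_comm]
            · by_cases hka : k = a
              · subst hka
                simp [hks, hki, Finset.mem_cons]
              · simp [hks, hki, hka, Finset.mem_cons]
      have hdiagfull : ∀ (e : Fin n → ℂ), (∀ l, e l ≠ 0) → (∀ l, e l ^ m = 1) →
          ((∏ l, e l) ^ (Nat.card C') = 1) →
          ∀ v : (Matrix (Fin n) (Fin n) ℂ)ˣ,
            (↑v : Matrix (Fin n) (Fin n) ℂ) = matMon n 1 e →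
            v ∈ Subgroup.closure S := by
        intro e he0 hem heN v hv
        have h0n : 0 < n := by omega
        set i0 : Fin n := ⟨0, h0n⟩ with hi0def
        have hi0 : i0 ∉ Finset.univ.erase i0 := Finset.notMem_erase _ _
        obtain ⟨u, huH, huval⟩ := hdiagaux (Finset.univ.erase i0) i0 hi0 e he0 hem
        have hprodne : (∏ l, e l) ≠ 0 := Finset.prod_ne_zero_iff.mpr (fun l _ => he0 l)
        have herasene : (∏ l ∈ Finset.univ.erase i0, e l) ≠ 0 :=
          Finset.prod_ne_zero_iff.mpr (fun l _ => he0 l)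
        have htm : Units.mk0 (∏ l, e l) hprodne ∈ C' := (hmemC' _).mpr (by simpa using heN)
        have htmem : t i0 (Units.mk0 (∏ l, e l) hprodne) ∈ Subgroup.closure S :=
          Subgroup.subset_closure (Or.inr ⟨i0, Units.mk0 (∏ l, e l) hprodne, htm, rfl⟩)
        have hw : (↑(u * t i0 (Units.mk0 (∏ l, e l) hprodne)) : Matrix (Fin n) (Fin n) ℂ)
            = matMon n 1 e := by
          rw [Units.val_mul, huval, ht, tMat_eq, matMon_mul, one_mul]
          apply congrArg (matMon n 1)
          funext k
          simp only [Equiv.Perm.coe_one, id_eq, Units.val_mk0]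
          by_cases hk : k = i0
          · subst hk
            simp only [Finset.notMem_erase, eq_self_iff_true, ↓reduceIte, not_false_eq_true]
            rw [← Finset.mul_prod_erase Finset.univ e (Finset.mem_univ i0),
              mul_comm (e i0) _, ← mul_assoc, inv_mul_cancel₀ herasene, one_mul]
          · simp [hk]
        have hveq : v = u * t i0 (Units.mk0 (∏ l, e l) hprodne) :=
          Units.ext (by rw [hv, ← hw])
        rw [hveq]
        exact mul_mem huH htmem
      have hperm : ∀ π : Equiv.Perm (Fin n), ∃ s : Fin n → ℂ,
          (∀ l, s l = 1 ∨ s l = -1) ∧ (∏ l, s l) = (Equiv.Perm.sign π : ℂ) ∧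
          ∃ u : (Matrix (Fin n) (Fin n) ℂ)ˣ, u ∈ Subgroup.closure S ∧
            (↑u : Matrix (Fin n) (Fin n) ℂ) = matMon n π s := by
        intro π
        refine Equiv.Perm.swap_induction_on π ?_ ?_
        · exact ⟨fun _ => 1, fun _ => Or.inl rfl, by simp, 1, one_mem _,
            by rw [Units.val_one, matMon_one]⟩
        · intro f x y hxy ih
          obtain ⟨s, hs1, hs2, u, huH, huval⟩ := ih
          refine ⟨fun l => sigD n x y 1 (f l) * s l, ?_, ?_, σ x y 1 * u,
            mul_mem (Subgroup.subset_closure (Or.inl ⟨x, y, 1, hxy, one_mem C, rfl⟩)) huH,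
            ?_⟩
          · intro l
            have h1 : sigD n x y 1 (f l) = 1 ∨ sigD n x y 1 (f l) = -1 := by
              unfold sigD
              split_ifs <;> norm_num
            rcases h1 with h1 | h1 <;> rcases hs1 l with h2 | h2 <;>
              simp [h1, h2]
          · show (∏ l, sigD n x y 1 (f l) * s l) = _
            rw [Finset.prod_mul_distrib, Equiv.prod_comp f (sigD n x y 1),
              prod_sigD n x y hxy 1 one_ne_zero, hs2]
            have hsgn : Equiv.Perm.sign (Equiv.swap x y * f) = - Equiv.Perm.sign f := by
              rw [Equiv.Perm.sign_mul, Equiv.Perm.sign_swap hxy, neg_one_mul]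
            rw [hsgn]
            push_cast
            ring
          · rw [Units.val_mul, hσ x y 1 hxy, Units.val_one, sigmaMat_eq n x y hxy 1,
              huval, matMon_mul]
      -- now the main argument
      rintro g ⟨⟨π, d, hd1, hd2, hd3⟩, hdet⟩
      have hne : ∀ l, d l ≠ 0 := isMonom_d_ne_zero hd3
      obtain ⟨s, hs1, hs2, u, huH, huval⟩ := hperm π
      have hsne : ∀ l, s l ≠ 0 := by
        intro l; rcases hs1 l with h | h <;> rw [h] <;> norm_num
      have hkey : (↑u : Matrix (Fin n) (Fin n) ℂ) *
          matMon n 1 (fun l => (s l)⁻¹ * d l) = matMon n π d := by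
        rw [huval, matMon_mul, mul_one]
        apply congrArg (matMon n π)
        funext l
        show s l * ((s l)⁻¹ * d l) = d l
        rw [← mul_assoc, mul_inv_cancel₀ (hsne l), one_mul]
      have hvval : (↑(u⁻¹ * g) : Matrix (Fin n) (Fin n) ℂ)
          = matMon n 1 (fun l => (s l)⁻¹ * d l) := by
        rw [Units.val_mul, hd3, ← hkey, ← mul_assoc, Units.inv_mul, one_mul]
      have hv : u⁻¹ * g ∈ Subgroup.closure S := by
        apply hdiagfull _ ?_ ?_ ?_ _ hvval
        · intro l
          exact mul_ne_zero (inv_ne_zero (hsne l)) (hne l)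
        · intro l
          have hsl : s l ^ m = 1 := by
            rcases hs1 l with h | h <;> rw [h]
            · exact one_pow m
            · exact hEvenm.neg_one_pow
          rw [mul_pow, inv_pow, hsl, inv_one, one_mul, hd1]
        · have hsg2 : ((Equiv.Perm.sign π : ℤ) : ℂ) * ((Equiv.Perm.sign π : ℤ) : ℂ) = 1 := by
            rcases Int.units_eq_one_or (Equiv.Perm.sign π) with h | h <;> rw [h] <;> norm_num
          have hsginv : ((Equiv.Perm.sign π : ℤ) : ℂ)⁻¹ = ((Equiv.Perm.sign π : ℤ) : ℂ) :=
            inv_eq_of_mul_eq_one_right hsg2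
          have hdetval : (Matrix.det (↑g : Matrix (Fin n) (Fin n) ℂ)) =
              ((Equiv.Perm.sign π : ℤ) : ℂ) * ∏ l, d l := by
            rw [hd3, matMon_det]
          rw [Finset.prod_mul_distrib, Finset.prod_inv_distrib, hs2, hsginv, ← hdetval]
          exact hdet
      have hgeq : g = u * (u⁻¹ * g) := by rw [← mul_assoc, mul_inv_cancel, one_mul]
      rw [hgeq]
      exact mul_mem huH hv
  -- Part 1 conclusion
  have hpart1 : Wset = {g : (Matrix (Fin n) (Fin n) ℂ)ˣ |
      g ∈ Gmpn ∧ (Matrix.det (↑g : Matrix (Fin n) (Fin n) ℂ)) ^ (Nat.card C') = 1} := by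
    rw [hW, hmain]
    rfl
  refine ⟨hpart1, ?_⟩
  rw [hpart1]
  -- Part 2: counting
  set B1 : Set ((Matrix (Fin n) (Fin n) ℂ)ˣ) :=
    {g | g ∈ Gmpn ∧ (Matrix.det (↑g : Matrix (Fin n) (Fin n) ℂ)) ^ (Nat.card C') = 1}
    with hB1def
  set B2 : Set ((Matrix (Fin n) (Fin n) ℂ)ˣ) :=
    {g | g ∈ Gmpn ∧ (Matrix.det (↑g : Matrix (Fin n) (Fin n) ℂ)) ^ (Nat.card C') = -1}
    with hB2def
  have h0n : 0 < n := by omega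
  have h1n : 1 < n := by omega
  have h01 : (⟨0, h0n⟩ : Fin n) ≠ (⟨1, h1n⟩ : Fin n) := by
    intro h
    simpa using congrArg Fin.val h
  set M0 : Matrix (Fin n) (Fin n) ℂ :=
    matMon n (Equiv.swap ⟨0, h0n⟩ ⟨1, h1n⟩) (fun _ => (1:ℂ)) with hM0def
  have hM0sq : M0 * M0 = 1 := by
    rw [hM0def, matMon_mul, Equiv.swap_mul_self]
    rw [show (fun l => (fun _ : Fin n => (1:ℂ)) ((Equiv.swap (⟨0, h0n⟩ : Fin n) ⟨1, h1n⟩) l)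
        * (1:ℂ)) = (fun _ : Fin n => (1:ℂ)) from funext fun l => mul_one 1]
    exact matMon_one n
  set hu : (Matrix (Fin n) (Fin n) ℂ)ˣ := ⟨M0, M0, hM0sq, hM0sq⟩ with hudef
  have huG : hu ∈ Gmpn :=
    ⟨Equiv.swap ⟨0, h0n⟩ ⟨1, h1n⟩, fun _ => (1:ℂ), fun _ => one_pow m, by simp, rfl⟩
  have hudet : (Matrix.det (↑hu : Matrix (Fin n) (Fin n) ℂ)) ^ (Nat.card C') = -1 := by
    show M0.det ^ (Nat.card C') = -1
    rw [hM0def, matMon_det, Equiv.Perm.sign_swap h01]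
    simp [hodd.neg_one_pow]
  have huu : hu * hu = 1 := Units.ext hM0sq
  have hmulG : ∀ {a b : (Matrix (Fin n) (Fin n) ℂ)ˣ}, a ∈ Gmpn → b ∈ Gmpn → a * b ∈ Gmpn :=
    fun ha hb => isMonom_mul ha hb
  have himg : (fun x => hu * x) '' B1 = B2 := by
    ext y
    constructor
    · rintro ⟨x, ⟨hxG, hxd⟩, rfl⟩
      refine ⟨hmulG huG hxG, ?_⟩
      rw [Units.val_mul, Matrix.det_mul, mul_pow, hudet, hxd, mul_one]
    · rintro ⟨hyG, hyd⟩
      refine ⟨hu * y, ⟨hmulG huG hyG, ?_⟩, ?_⟩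
      · rw [Units.val_mul, Matrix.det_mul, mul_pow, hudet, hyd]
        norm_num
      · show hu * (hu * y) = y
        rw [← mul_assoc, huu, one_mul]
  have hsplit : Gmpn = B1 ∪ B2 := by
    apply Set.ext
    intro g
    constructor
    · intro hg
      rcases isMonom_det_sq hq hg with h | h
      · exact Or.inl ⟨hg, h⟩
      · exact Or.inr ⟨hg, h⟩
    · intro hg
      exact hg.elim And.left And.left
  have hdisj : Disjoint B1 B2 := by
    rw [Set.disjoint_left]
    rintro g ⟨_, h1⟩ ⟨_, h2⟩
    rw [h1] at h2
    norm_num at h2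
  have hroots_fin : ({z : ℂ | z ^ m = 1}).Finite := by
    apply Set.Finite.subset (Finset.finite_toSet (Polynomial.nthRoots m (1:ℂ)).toFinset)
    intro z hz
    simp only [Finset.coe_sort_coe, Multiset.mem_toFinset, Finset.mem_coe]
    rw [Polynomial.mem_nthRoots (Nat.pos_of_ne_zero hm0)]
    exact hz
  have hS0fin : (insert (0:ℂ) {z : ℂ | z ^ m = 1}).Finite := hroots_fin.insert 0
  have hMatfin : ({A : Matrix (Fin n) (Fin n) ℂ |
      ∀ k l, A k l ∈ insert (0:ℂ) {z : ℂ | z ^ m = 1}}).Finite := by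
    apply Set.Finite.subset
      (Set.Finite.pi (fun _ : Fin n => Set.Finite.pi (fun _ : Fin n => hS0fin)))
    intro A hA
    rw [Set.mem_univ_pi]
    intro k
    rw [Set.mem_univ_pi]
    intro l
    exact hA k l
  have hGfin : Gmpn.Finite := by
    apply Set.Finite.subset (Set.Finite.preimage (Function.Injective.injOn Units.val_injective) hMatfin)
    rintro g ⟨π, d, hd1, hd2, hd3⟩
    show (↑g : Matrix (Fin n) (Fin n) ℂ) ∈ {A : Matrix (Fin n) (Fin n) ℂ |
      ∀ k l, A k l ∈ insert (0:ℂ) {z : ℂ | z ^ m = 1}}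
    intro k l
    rw [hd3]
    show (if k = π l then d l else 0) ∈ _
    by_cases hkl : k = π l
    · rw [if_pos hkl]
      exact Set.mem_insert_iff.mpr (Or.inr (hd1 l))
    · rw [if_neg hkl]
      exact Set.mem_insert _ _
  have hB1fin : B1.Finite := hGfin.subset (fun g hg => hg.1)
  have hB2fin : B2.Finite := hGfin.subset (fun g hg => hg.1)
  have hcount : Gmpn.ncard = B1.ncard + B2.ncard := by
    rw [hsplit]
    exact Set.ncard_union_eq hdisj hB1fin hB2fin
  have hB21 : B2.ncard = B1.ncard := by
    rw [← himg]
    exact Set.ncard_image_of_injective _ (mul_right_injective hu)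
  have e1 : Nat.card Gmpn = Gmpn.ncard := Nat.card_coe_set_eq _
  have e2 : Nat.card B1 = B1.ncard := Nat.card_coe_set_eq _
  rw [e1, e2, hcount, hB21]
  ring
end

section
/- In the skew field of fractions of S_{−1}(V) (n ≥ 2), define D_{ij} = (x_i² − x_j²)⁻¹ ((x_i + x_j)(1 − σ_{ij}) + (x_i − x_j)(1 − σ_{ji})) as an operator on S_{−1}(V) localized at x_i²−x_j², where σ_{ij} = σ_{ij}^{(1)} and σ_{ji} = σ_{ij}^{(−1)}. Then as operators: [γ_i D_{ij}, x_i] = (−id)s_{ij}^{(1)} + (−id)s_{ij}^{(−1)}, [γ_i D_{ij}, x_j] = (−id)s_{ij}^{(1)} − (−id)s_{ij}^{(−1)}, and [γ_i D_{ij}, x_k] = 0 for k ∉ {i,j}, where s_{ij}^{(ε)} = (ij)t_i^{(ε)}t_j^{(ε⁻¹)}, γ_i acts by −1 on x_k (k≠i) and +1 on x_i, and x_k denotes the multiplication operator. -/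
/-- Commutators of the operator `γ_i D_{ij}` with left multiplication by the
generators `x_k`, where
`D_{ij} = (x_i²−x_j²)⁻¹((x_i+x_j)(1−σ_{ij}) + (x_i−x_j)(1−σ_{ji}))`
acts on (the localization of) `S_{−1}(V)`. -/
theorem gammaD_commutators (n : ℕ) (A : Type) [Ring A] [Algebra ℂ A]
    (X : Fin n → A) (hanti : ∀ k l, k ≠ l → X k * X l = -(X l * X k))
    (i j : Fin n) (hij : i ≠ j)
    (u : A) (hu1 : u * (X i ^ 2 - X j ^ 2) = 1) (hu2 : (X i ^ 2 - X j ^ 2) * u = 1)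
    (hucentral : ∀ a : A, u * a = a * u)
    (hgen : Algebra.adjoin ℂ (Set.range X ∪ {u}) = ⊤)
    (σij σji m1 m2 γi : A →ₐ[ℂ] A)
    (hσij : σij (X i) = X j ∧ σij (X j) = -X i ∧
      ∀ k, k ≠ i → k ≠ j → σij (X k) = X k)
    (hσji : σji (X j) = X i ∧ σji (X i) = -X j ∧
      ∀ k, k ≠ i → k ≠ j → σji (X k) = X k)
    (hm1 : m1 (X i) = -X j ∧ m1 (X j) = -X i ∧
      ∀ k, k ≠ i → k ≠ j → m1 (X k) = -X k)
    (hm2 : m2 (X i) = X j ∧ m2 (X j) = X i ∧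
      ∀ k, k ≠ i → k ≠ j → m2 (X k) = -X k)
    (hγi : γi (X i) = X i ∧ ∀ k, k ≠ i → γi (X k) = -X k) :
    let D : A →ₗ[ℂ] A :=
      LinearMap.mulLeft ℂ u ∘ₗ
        (LinearMap.mulLeft ℂ (X i + X j) ∘ₗ (LinearMap.id - σij.toLinearMap) +
          LinearMap.mulLeft ℂ (X i - X j) ∘ₗ (LinearMap.id - σji.toLinearMap))
    let gD : A →ₗ[ℂ] A := γi.toLinearMap ∘ₗ D
    (gD ∘ₗ LinearMap.mulLeft ℂ (X i) - LinearMap.mulLeft ℂ (X i) ∘ₗ gD =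
        m1.toLinearMap + m2.toLinearMap) ∧
    (gD ∘ₗ LinearMap.mulLeft ℂ (X j) - LinearMap.mulLeft ℂ (X j) ∘ₗ gD =
        m1.toLinearMap - m2.toLinearMap) ∧
    (∀ k, k ≠ i → k ≠ j →
      gD ∘ₗ LinearMap.mulLeft ℂ (X k) - LinearMap.mulLeft ℂ (X k) ∘ₗ gD = 0) := by
  obtain ⟨hσij1, hσij2, hσij3⟩ := hσij
  obtain ⟨hσji1, hσji2, hσji3⟩ := hσji
  obtain ⟨hm11, hm12, hm13⟩ := hm1
  obtain ⟨hm21, hm22, hm23⟩ := hm2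
  obtain ⟨hγ1, hγ2⟩ := hγi
  intro D gD
  have hji : j ≠ i := hij.symm
  have hγj : γi (X j) = -X j := hγ2 j hji
  -- pointwise anticommutation
  have hanti' : ∀ k l, k ≠ l → ∀ c : A, X k * (X l * c) = -(X l * (X k * c)) := by
    intro k l hkl c
    rw [← mul_assoc, hanti k l hkl, neg_mul, mul_assoc]
  -- uniqueness of two-sided inverses
  have inv_unique : ∀ v b c : A, b * v = 1 → v * c = 1 → b = c := by
    intro v b c h1 h2
    calc b = b * (v * c) := by rw [h2, mul_one]
    _ = (b * v) * c := by rw [mul_assoc]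
    _ = c := by rw [h1, one_mul]
  set v : A := X i ^ 2 - X j ^ 2 with hv
  -- γi fixes u
  have hγv : γi v = v := by
    simp [hv, hγ1, hγj]
  have hγu : γi u = u := by
    refine inv_unique v _ _ ?_ hu2
    rw [← hγv, ← map_mul, hu1, map_one]
  -- γi ∘ σij = m1
  have hP : γi.comp σij = m1 := by
    apply AlgHom.ext_of_adjoin_eq_top hgen
    rintro x (⟨k, rfl⟩ | hx)
    · by_cases hki : k = i
      · subst hki; simp [hσij1, hγj, hm11]
      · by_cases hkj : k = j
        · subst hkj; simp [hσij2, hγ1, hm12 ]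
        · simp [hσij3 k hki hkj, hγ2 k hki, hm13 k hki hkj]
    · simp only [Set.mem_singleton_iff] at hx
      subst hx
      have h1 : (γi.comp σij) v = -v := by
        simp [hv, hσij1, hσij2, hγ1, hγj]
      have h2 : m1 v = -v := by
        simp [hv, hm11, hm12]
      refine inv_unique (-v) _ _ ?_ ?_
      · rw [← h1, ← map_mul, hu1, map_one]
      · rw [← h2, ← map_mul, hu2, map_one]
  -- γi ∘ σji = m2
  have hQ : γi.comp σji = m2 := by
    apply AlgHom.ext_of_adjoin_eq_top hgen
    rintro x (⟨k, rfl⟩ | hx)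
    · by_cases hki : k = i
      · subst hki; simp [hσji2, hγj, hm21]
      · by_cases hkj : k = j
        · subst hkj; simp [hσji1, hγ1, hm22]
        · simp [hσji3 k hki hkj, hγ2 k hki, hm23 k hki hkj]
    · simp only [Set.mem_singleton_iff] at hx
      subst hx
      have h1 : (γi.comp σji) v = -v := by
        simp [hv, hσji1, hσji2, hγ1, hγj]
      have h2 : m2 v = -v := by
        simp [hv, hm21, hm22]
      refine inv_unique (-v) _ _ ?_ ?_
      · rw [← h1, ← map_mul, hu1, map_one]
      · rw [← h2, ← map_mul, hu2, map_one]
  have hPa : ∀ a, γi (σij a) = m1 a := fun a => AlgHom.congr_fun hP a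
  have hQa : ∀ a, γi (σji a) = m2 a := fun a => AlgHom.congr_fun hQ a
  -- value of gD
  have hgD : ∀ a, gD a =
      u * ((X i - X j) * (γi a - m1 a) + (X i + X j) * (γi a - m2 a)) := by
    intro a
    simp only [gD, D, LinearMap.comp_apply, LinearMap.mulLeft_apply, LinearMap.add_apply,
      LinearMap.sub_apply, LinearMap.id_apply, AlgHom.toLinearMap_apply,
      map_mul, map_add, map_sub, hγu, hγ1, hγj, hPa, hQa]
    noncomm_ring
  -- centrality helper
  have hcent : ∀ c z : A, c * (u * z) = u * (c * z) := by
    intro c z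
    rw [← mul_assoc, ← hucentral, mul_assoc]
  refine ⟨?_, ?_, ?_⟩
  · ext a
    simp only [LinearMap.sub_apply, LinearMap.add_apply, LinearMap.comp_apply,
      LinearMap.mulLeft_apply, AlgHom.toLinearMap_apply]
    have h1 : gD (X i * a) =
        u * ((X i - X j) * (X i * γi a + X j * m1 a)
          + (X i + X j) * (X i * γi a - X j * m2 a)) := by
      rw [hgD]; simp only [map_mul, hγ1, hm11, hm21]
      noncomm_ring
    rw [h1, hgD a, hcent, ← mul_sub]
    have h2 : ((X i - X j) * (X i * γi a + X j * m1 a)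
          + (X i + X j) * (X i * γi a - X j * m2 a))
        - X i * ((X i - X j) * (γi a - m1 a) + (X i + X j) * (γi a - m2 a))
        = (X i ^ 2 - X j ^ 2) * (m1 a + m2 a) := by
      noncomm_ring [hanti' j i hji]
    rw [h2, ← mul_assoc, hu1, one_mul]
  · ext a
    simp only [LinearMap.sub_apply, LinearMap.comp_apply,
      LinearMap.mulLeft_apply, AlgHom.toLinearMap_apply]
    have h1 : gD (X j * a) =
        u * ((X i - X j) * (-(X j * γi a) + X i * m1 a)
          + (X i + X j) * (-(X j * γi a) - X i * m2 a)) := by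
      rw [hgD]; simp only [map_mul, hγj, hm12, hm22]
      noncomm_ring
    rw [h1, hgD a, hcent, ← mul_sub]
    have h2 : ((X i - X j) * (-(X j * γi a) + X i * m1 a)
          + (X i + X j) * (-(X j * γi a) - X i * m2 a))
        - X j * ((X i - X j) * (γi a - m1 a) + (X i + X j) * (γi a - m2 a))
        = (X i ^ 2 - X j ^ 2) * (m1 a - m2 a) := by
      noncomm_ring [hanti' j i hji]
    rw [h2, ← mul_assoc, hu1, one_mul]
  · intro k hki hkj
    ext a
    simp only [LinearMap.sub_apply, LinearMap.comp_apply, LinearMap.zero_apply,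
      LinearMap.mulLeft_apply]
    have h1 : gD (X k * a) =
        u * ((X i - X j) * (-(X k * γi a) + X k * m1 a)
          + (X i + X j) * (-(X k * γi a) + X k * m2 a)) := by
      rw [hgD]; simp only [map_mul, hγ2 k hki, hm13 k hki hkj, hm23 k hki hkj]
      noncomm_ring
    rw [h1, hgD a, hcent, ← mul_sub]
    have h2 : ((X i - X j) * (-(X k * γi a) + X k * m1 a)
          + (X i + X j) * (-(X k * γi a) + X k * m2 a))
        - X k * ((X i - X j) * (γi a - m1 a) + (X i + X j) * (γi a - m2 a))
        = 0 := by
      noncomm_ring [hanti' k i hki, hanti' k j hkj]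
    rw [h2, mul_zero]
end

section
/- Let W be an abelian group acting diagonally on V = ℂⁿ, W = 𝒞_1 × ⋯ × 𝒞_n with each 𝒞_i a finite subgroup of ℂ× acting on the variable x_i. For parameters c_{i,ε} ∈ ℂ define braided Dunkl operators on S_q(V): ∇̂_i = ∂̂_i + Σ_{ε∈𝒞_i∖{1}} (c_{i,ε}/(1−ε)) x_i⁻¹(1 − t_i^{(ε)}). Then ∇̂_i preserves S_q(V), and the operators satisfy ∇̂_i x_j − q_{ji} x_j ∇̂_i = δ_{ij}(1 + Σ_{ε∈𝒞_i∖{1}} c_{i,ε} t_i^{(ε)}) and ∇̂_i ∇̂_j = q_{ij} ∇̂_j ∇̂_i for all i,j. -/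
open scoped BigOperators

open Finsupp MvPolynomial

private lemma prod_shift_add {n : ℕ} (s : Finset (Fin n)) (F : Fin n → ℂ) (a : Fin n →₀ ℕ)
    (j : Fin n) :
    (∏ k ∈ s, F k ^ (((a + Finsupp.single j 1 : Fin n →₀ ℕ) k))) =
      (if j ∈ s then F j else 1) * ∏ k ∈ s, F k ^ a k := by
  simp only [Finsupp.add_apply, pow_add, Finset.prod_mul_distrib]
  rw [mul_comm]
  congr 1
  have h : ∀ k ∈ s, F k ^ (Finsupp.single j 1) k = if j = k then F k else 1 := by
    intro k _
    rw [Finsupp.single_apply]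
    split <;> simp
  rw [Finset.prod_congr rfl h, Finset.prod_ite_eq]

private lemma prod_shift_sub {n : ℕ} (s : Finset (Fin n)) (F : Fin n → ℂ) (a : Fin n →₀ ℕ)
    (j : Fin n) (h : 1 ≤ a j) :
    (∏ k ∈ s, F k ^ a k) =
      (if j ∈ s then F j else 1) * ∏ k ∈ s, F k ^ (((a - Finsupp.single j 1 : Fin n →₀ ℕ) k)) := by
  have hle : Finsupp.single j 1 ≤ a := Finsupp.single_le_iff.2 h
  conv_lhs => rw [← tsub_add_cancel_of_le hle]
  exact prod_shift_add s F (a - Finsupp.single j 1) j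

private lemma prod_sub_notmem {n : ℕ} (s : Finset (Fin n)) (F : Fin n → ℂ) (a : Fin n →₀ ℕ)
    (j : Fin n) (h : j ∉ s) :
    (∏ k ∈ s, F k ^ (((a - Finsupp.single j 1 : Fin n →₀ ℕ) k))) = ∏ k ∈ s, F k ^ a k :=
  Finset.prod_congr rfl fun k hk => by
    rw [Finsupp.tsub_apply, Finsupp.single_apply, if_neg (by rintro rfl; exact h hk), Nat.sub_zero]

private noncomputable def bdP {n : ℕ} (q : Fin n → Fin n → ℂ) (i : Fin n) (a : Fin n →₀ ℕ) : ℂ :=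
  ∏ k ∈ Finset.univ.filter (fun k => k < i), q k i ^ a k

private noncomputable def bdQ {n : ℕ} (q : Fin n → Fin n → ℂ) (j : Fin n) (a : Fin n →₀ ℕ) : ℂ :=
  ∏ k ∈ Finset.univ.filter (fun k => k < j), q j k ^ a k

private lemma bdP_add {n : ℕ} (q : Fin n → Fin n → ℂ) (i j : Fin n) (a : Fin n →₀ ℕ) :
    bdP q i (a + Finsupp.single j 1) = (if j < i then q j i else 1) * bdP q i a := by
  unfold bdP
  rw [prod_shift_add]
  simp [Finset.mem_filter]

private lemma bdP_sub {n : ℕ} (q : Fin n → Fin n → ℂ) (i j : Fin n) (a : Fin n →₀ ℕ)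
    (h : 1 ≤ a j) :
    bdP q i a = (if j < i then q j i else 1) * bdP q i (a - Finsupp.single j 1) := by
  unfold bdP
  rw [prod_shift_sub _ _ _ j h]
  simp [Finset.mem_filter]

private lemma bdP_sub_self {n : ℕ} (q : Fin n → Fin n → ℂ) (i : Fin n) (a : Fin n →₀ ℕ) :
    bdP q i (a - Finsupp.single i 1) = bdP q i a := by
  unfold bdP
  exact prod_sub_notmem _ _ _ _ (by simp)

private lemma bdQ_sub {n : ℕ} (q : Fin n → Fin n → ℂ) (j i : Fin n) (a : Fin n →₀ ℕ)
    (h : 1 ≤ a i) :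
    bdQ q j a = (if i < j then q j i else 1) * bdQ q j (a - Finsupp.single i 1) := by
  unfold bdQ
  rw [prod_shift_sub _ _ _ i h]
  simp [Finset.mem_filter]

private lemma bdQ_sub_self {n : ℕ} (q : Fin n → Fin n → ℂ) (i : Fin n) (a : Fin n →₀ ℕ) :
    bdQ q i (a - Finsupp.single i 1) = bdQ q i a := by
  unfold bdQ
  exact prod_sub_notmem _ _ _ _ (by simp)

private lemma bdQP {n : ℕ} (q : Fin n → Fin n → ℂ) (hinv : ∀ i j, q i j * q j i = 1)
    (i : Fin n) (a : Fin n →₀ ℕ) : bdQ q i a * bdP q i a = 1 := by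
  unfold bdP bdQ
  rw [← Finset.prod_mul_distrib]
  apply Finset.prod_eq_one
  intro k _
  rw [← mul_pow, hinv, one_pow]

private noncomputable def bdf {n : ℕ} (C : Fin n → Finset ℂˣ) (c : Fin n → ℂˣ → ℂ)
    (i : Fin n) (m : ℕ) : ℂ :=
  (m : ℂ) + ∑ ε ∈ (C i).erase 1, (c i ε / (1 - (ε : ℂ))) * (1 - (ε : ℂ) ^ m)

private lemma bdf_zero {n : ℕ} (C : Fin n → Finset ℂˣ) (c : Fin n → ℂˣ → ℂ) (i : Fin n) :
    bdf C c i 0 = 0 := by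
  simp [bdf]

private lemma bdf_succ_sub {n : ℕ} (C : Fin n → Finset ℂˣ) (c : Fin n → ℂˣ → ℂ)
    (i : Fin n) (m : ℕ) :
    bdf C c i (m + 1) - bdf C c i m = 1 + ∑ ε ∈ (C i).erase 1, c i ε * (ε : ℂ) ^ m := by
  have key : (∑ ε ∈ (C i).erase 1, (c i ε / (1 - (ε : ℂ))) * (1 - (ε : ℂ) ^ (m+1)))
      - (∑ ε ∈ (C i).erase 1, (c i ε / (1 - (ε : ℂ))) * (1 - (ε : ℂ) ^ m))
      = ∑ ε ∈ (C i).erase 1, c i ε * (ε : ℂ) ^ m := by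
    rw [← Finset.sum_sub_distrib]
    refine Finset.sum_congr rfl fun ε hε => ?_
    have h1 : (1 : ℂ) - (ε : ℂ) ≠ 0 := by
      have h2 : ((ε : ℂˣ) : ℂ) ≠ 1 := fun h => (Finset.mem_erase.1 hε).1 (Units.ext h)
      exact sub_ne_zero.2 (Ne.symm h2)
    field_simp
    ring
  unfold bdf
  push_cast
  linear_combination key

/-- The braided Dunkl operators
`∇̂_i = ∂̂_i + Σ_{ε∈𝒞_i∖{1}} (c_{i,ε}/(1−ε)) x_i⁻¹(1 − t_i^{(ε)})`
attached to an abelian group `W = 𝒞_1 × ⋯ × 𝒞_n` acting on `S_q(V)` (modelled on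
its monomial basis) satisfy
`∇̂_i x_j − q_{ji} x_j ∇̂_i = δ_{ij}(1 + Σ_{ε} c_{i,ε} t_i^{(ε)})` and
`∇̂_i ∇̂_j = q_{ij} ∇̂_j ∇̂_i`. -/
theorem braided_dunkl_abelian (n : ℕ) (q : Fin n → Fin n → ℂ)
    (hdiag : ∀ i, q i i = 1) (hinv : ∀ i j, q i j * q j i = 1)
    (C : Fin n → Finset ℂˣ)
    (hgrp : ∀ i, ∃ H : Subgroup ℂˣ, (C i : Set ℂˣ) = (H : Set ℂˣ))
    (c : Fin n → ℂˣ → ℂ)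
    (D X : Fin n → (MvPolynomial (Fin n) ℂ →ₗ[ℂ] MvPolynomial (Fin n) ℂ))
    (hD : ∀ (i : Fin n) (a : Fin n →₀ ℕ),
      D i (MvPolynomial.monomial a 1) =
        ((a i : ℂ) * ∏ k ∈ Finset.univ.filter (fun k => k < i), q k i ^ a k) •
          MvPolynomial.monomial (a - Finsupp.single i 1) 1)
    (hX : ∀ (i : Fin n) (a : Fin n →₀ ℕ),
      X i (MvPolynomial.monomial a 1) =
        (∏ k ∈ Finset.univ.filter (fun k => k < i), q i k ^ a k) •
          MvPolynomial.monomial (a + Finsupp.single i 1) 1)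
    (E : Fin n → ℂˣ → (MvPolynomial (Fin n) ℂ →ₗ[ℂ] MvPolynomial (Fin n) ℂ))
    (hE : ∀ (i : Fin n) (ε : ℂˣ) (a : Fin n →₀ ℕ),
      E i ε (MvPolynomial.monomial a 1) =
        ((1 - (ε : ℂ) ^ (a i)) * ∏ k ∈ Finset.univ.filter (fun k => k < i), q k i ^ a k) •
          MvPolynomial.monomial (a - Finsupp.single i 1) 1)
    (T : Fin n → ℂˣ → (MvPolynomial (Fin n) ℂ →ₗ[ℂ] MvPolynomial (Fin n) ℂ))
    (hT : ∀ (i : Fin n) (ε : ℂˣ) (a : Fin n →₀ ℕ),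
      T i ε (MvPolynomial.monomial a 1) =
        ((ε : ℂ) ^ (a i)) • MvPolynomial.monomial a 1) :
    let N : Fin n → (MvPolynomial (Fin n) ℂ →ₗ[ℂ] MvPolynomial (Fin n) ℂ) :=
      fun i => D i + ∑ ε ∈ (C i).erase 1, (c i ε / (1 - (ε : ℂ))) • E i ε
    (∀ i j, N i ∘ₗ X j - q j i • (X j ∘ₗ N i) =
        if i = j then LinearMap.id + ∑ ε ∈ (C i).erase 1, c i ε • T i ε else 0) ∧
    (∀ i j, N i ∘ₗ N j = q i j • (N j ∘ₗ N i)) := by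
  intro N
  have hNdef : ∀ i, N i = D i + ∑ ε ∈ (C i).erase 1, (c i ε / (1 - (ε : ℂ))) • E i ε :=
    fun _ => rfl
  have hN : ∀ (i : Fin n) (a : Fin n →₀ ℕ),
      N i (MvPolynomial.monomial a 1) =
        (bdf C c i (a i) * bdP q i a) •
          MvPolynomial.monomial (a - Finsupp.single i 1) 1 := by
    intro i a
    rw [hNdef]
    simp only [LinearMap.add_apply, LinearMap.sum_apply, LinearMap.smul_apply, hD, hE, smul_smul]
    rw [← Finset.sum_smul, ← add_smul]
    congr 1
    unfold bdf bdP
    rw [add_mul, Finset.sum_mul]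
    congr 1
    exact Finset.sum_congr rfl fun ε _ => by ring
  have hXP : ∀ (j : Fin n) (a : Fin n →₀ ℕ),
      X j (MvPolynomial.monomial a 1) =
        (bdQ q j a) • MvPolynomial.monomial (a + Finsupp.single j 1) 1 := by
    intro j a; rw [hX]; rfl
  constructor
  · intro i j
    by_cases hij : i = j
    · subst hij
      rw [if_pos rfl, hdiag, one_smul]
      apply (MvPolynomial.basisMonomials (Fin n) ℂ).ext
      intro a
      simp only [MvPolynomial.coe_basisMonomials, LinearMap.sub_apply, LinearMap.comp_apply,
        LinearMap.add_apply, LinearMap.sum_apply, LinearMap.smul_apply, LinearMap.id_apply]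
      rw [hXP, map_smul, hN, hN, map_smul, hXP]
      simp only [smul_smul, hT]
      have hRHS : (MvPolynomial.monomial a (1:ℂ)) +
          ∑ ε ∈ (C i).erase 1, (c i ε * (ε : ℂ) ^ (a i)) • MvPolynomial.monomial a (1:ℂ) =
          (1 + ∑ ε ∈ (C i).erase 1, c i ε * (ε : ℂ) ^ (a i)) • MvPolynomial.monomial a (1:ℂ) := by
        rw [add_smul, one_smul, Finset.sum_smul]
      rw [hRHS]
      have hidx : a + Finsupp.single i 1 - Finsupp.single i 1 = a := by
        ext k; simp [Finsupp.tsub_apply, Finsupp.add_apply]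
      have happ : ((a + Finsupp.single i 1 : Fin n →₀ ℕ) i) = a i + 1 := by
        simp [Finsupp.add_apply, Finsupp.single_eq_same]
      have hPP : bdP q i (a + Finsupp.single i 1) = bdP q i a := by
        rw [bdP_add]; simp
      have hQQ : bdQ q i (a - Finsupp.single i 1) = bdQ q i a := bdQ_sub_self q i a
      rw [hidx, happ, hPP, hQQ]
      have hqp := bdQP q hinv i a
      rcases Nat.eq_zero_or_pos (a i) with h0 | hpos
      · rw [h0]
        simp only [bdf_zero, zero_mul, zero_smul, sub_zero]
        congr 1
        have hd := bdf_succ_sub C c i 0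
        rw [bdf_zero, sub_zero] at hd
        linear_combination bdf C c i (0 + 1) * hqp + hd
      · rw [tsub_add_cancel_of_le (Finsupp.single_le_iff.2 hpos), ← sub_smul]
        congr 1
        linear_combination (bdf C c i (a i + 1) - bdf C c i (a i)) * hqp + bdf_succ_sub C c i (a i)
    · rw [if_neg hij]
      apply (MvPolynomial.basisMonomials (Fin n) ℂ).ext
      intro a
      simp only [MvPolynomial.coe_basisMonomials, LinearMap.sub_apply, LinearMap.comp_apply,
        LinearMap.smul_apply, LinearMap.zero_apply]
      rw [hXP, map_smul, hN, hN, map_smul, hXP]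
      simp only [smul_smul]
      have happ : ((a + Finsupp.single j 1 : Fin n →₀ ℕ) i) = a i := by
        simp [Finsupp.add_apply, Finsupp.single_apply, (Ne.symm hij : j ≠ i)]
      rw [happ]
      rcases Nat.eq_zero_or_pos (a i) with h0 | hpos
      · rw [h0, bdf_zero]
        simp
      · have hidx : a + Finsupp.single j 1 - Finsupp.single i 1 =
            a - Finsupp.single i 1 + Finsupp.single j 1 :=
          (tsub_add_eq_add_tsub (Finsupp.single_le_iff.2 hpos)).symm
        rw [hidx, ← sub_smul]
        convert zero_smul ℂ _
        rw [bdP_add, bdQ_sub q j i a hpos]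
        rcases lt_or_gt_of_ne hij with h | h
        · rw [if_neg (asymm h), if_pos h]; ring
        · rw [if_pos h, if_neg (asymm h)]; ring
  · intro i j
    by_cases hij : i = j
    · subst hij
      rw [hdiag, one_smul]
    · apply (MvPolynomial.basisMonomials (Fin n) ℂ).ext
      intro a
      simp only [MvPolynomial.coe_basisMonomials, LinearMap.comp_apply, LinearMap.smul_apply]
      rw [hN, map_smul, hN, hN, map_smul, hN]
      simp only [smul_smul]
      have happ1 : ((a - Finsupp.single j 1 : Fin n →₀ ℕ) i) = a i := by
        rw [Finsupp.tsub_apply, Finsupp.single_apply, if_neg (Ne.symm hij), Nat.sub_zero]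
      have happ2 : ((a - Finsupp.single i 1 : Fin n →₀ ℕ) j) = a j := by
        rw [Finsupp.tsub_apply, Finsupp.single_apply, if_neg hij, Nat.sub_zero]
      have hidx : a - Finsupp.single j 1 - Finsupp.single i 1 =
          a - Finsupp.single i 1 - Finsupp.single j 1 := by
        rw [tsub_tsub, tsub_tsub, add_comm]
      rw [happ1, happ2, hidx]
      congr 1
      rcases Nat.eq_zero_or_pos (a i) with h0 | hposi
      · rw [h0, bdf_zero]; ring
      rcases Nat.eq_zero_or_pos (a j) with h0 | hposj
      · rw [h0, bdf_zero]; ring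
      rw [bdP_sub q i j a hposj, bdP_sub q j i a hposi]
      rcases lt_or_gt_of_ne hij with h | h
      · rw [if_neg (asymm h), if_pos h]; ring
      · rw [if_pos h, if_neg (asymm h)]
        linear_combination (-(bdf C c j (a j) * bdf C c i (a i) *
          bdP q j (a - Finsupp.single i 1) * bdP q i (a - Finsupp.single j 1))) * hinv i j
end

section
/- Let w ∈ GL_n(ℂ) be invertible with matrix entries w_k^i satisfying (q_{kl} − q_{ij}) w_k^i w_l^j = 0 for all indices i,j,k,l, where q is an n×n matrix with q_{ii}=1, q_{ij}q_{ji}=1. Then there exists a permutation σ ∈ S_n with w_i^{σ(i)} ≠ 0 for all i, and for any such σ one has q_{σ(i)σ(j)} = q_{ij} for all i,j. -/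
/-- For an invertible matrix `w` with `(q_{kl} − q_{ij}) w_k^i w_l^j = 0` for all
indices, there is a permutation `σ` with `w_i^{σ(i)} ≠ 0` for all `i`, and any
such permutation satisfies `q_{σ(i)σ(j)} = q_{ij}`. -/
theorem exists_perm_q_invariant (n : ℕ) (q : Fin n → Fin n → ℂ)
    (hdiag : ∀ i, q i i = 1) (hinv : ∀ i j, q i j * q j i = 1)
    (w : Matrix (Fin n) (Fin n) ℂ) (hw : IsUnit w)
    (hcond : ∀ i j k l, (q k l - q i j) * w k i * w l j = 0) :
    (∃ σ : Equiv.Perm (Fin n), ∀ i, w i (σ i) ≠ 0) ∧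
    ∀ σ : Equiv.Perm (Fin n), (∀ i, w i (σ i) ≠ 0) →
      ∀ i j, q (σ i) (σ j) = q i j := by
  constructor
  · have hdet : w.det ≠ 0 := by
      have := (Matrix.isUnit_iff_isUnit_det w).mp hw
      exact this.ne_zero
    rw [Matrix.det_apply] at hdet
    obtain ⟨σ, -, hσ⟩ := Finset.exists_ne_zero_of_sum_ne_zero hdet
    have hprod : (∏ i, w (σ i) i) ≠ 0 := by
      intro h
      rw [h, smul_zero] at hσ
      exact hσ rfl
    refine ⟨σ⁻¹, fun i => ?_⟩
    have := Finset.prod_ne_zero_iff.mp hprod (σ⁻¹ i) (Finset.mem_univ _)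
    simpa using this
  · intro σ hσ i j
    have h := hcond (σ i) (σ j) i j
    rcases mul_eq_zero.mp h with h' | h'
    · rcases mul_eq_zero.mp h' with h'' | h''
      · exact (sub_eq_zero.mp h'').symm
      · exact absurd h'' (hσ i)
    · exact absurd h' (hσ j)
end
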